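/- arXiv:1908.05975 — 9 statements merged into one kernel-verified Lean document; each statement's English description precedes it below -/
import Mathlib

section
/- Let g be a finite-dimensional real nilpotent Lie algebra with a nice basis {e_1,…,e_n}, and let σ be an arrow-breaking involution of this basis. Then every σ-diagonal metric on g is Ricci-flat. -/
open scoped BigOperators

namespace ArrowBreakingPaper

variable {ι : Type*} {g : Type*} [LieRing g] [LieAlgebra ℝ g]

/-- `⁅e i, e j⁆` is a nonzero multiple of `e k` (the arrow `e i →^{e j} e k`). -/
def Arrow (e : ι → g) (i j k : ι) : Prop :=
  ∃ c : ℝ, c ≠ 0 ∧ ⁅e i, e j⁆ = c • e k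

/-- A basis is *nice* if each bracket of two basis vectors is a multiple of a single basis
vector, and for all `i`, `k` there is at most one `j` such that the `e k`-coefficient of
`⁅e i, e j⁆` is nonzero. -/
def IsNiceBasis (e : Module.Basis ι ℝ g) : Prop :=
  (∀ i j : ι, ∃ (k : ι) (c : ℝ), ⁅e i, e j⁆ = c • e k) ∧
  (∀ i k j j' : ι, e.repr ⁅e i, e j⁆ k ≠ 0 → e.repr ⁅e i, e j'⁆ k ≠ 0 → j = j')

/-- An *arrow-breaking involution* of the (nice) basis `e`. -/
def IsArrowBreaking (e : ι → g) (σ : Equiv.Perm ι) : Prop :=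
  (∀ i, σ (σ i) = i) ∧
  (∀ i j k, Arrow e i j k → ∀ l, ¬ Arrow e l (σ j) (σ k)) ∧
  (∀ i j k, Arrow e i j k → ∀ m, ¬ Arrow e (σ i) (σ j) m)

/-- A `σ`-diagonal metric: `⟨e i, e (σ j)⟩ = gᵢ δᵢⱼ` with all `gᵢ ≠ 0` and `g_{σ i} = gᵢ`. -/
def IsSigmaDiagonal [DecidableEq ι] (e : Module.Basis ι ℝ g) (σ : Equiv.Perm ι)
    (B : LinearMap.BilinForm ℝ g) : Prop :=
  ∃ gv : ι → ℝ, (∀ i, gv i ≠ 0) ∧ (∀ i, gv (σ i) = gv i) ∧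
    ∀ i j, B (e i) (e (σ j)) = if i = j then gv i else 0

/-- Symmetry of a bilinear form. -/
def IsSymm (B : LinearMap.BilinForm ℝ g) : Prop := ∀ x y : g, B x y = B y x

/-- Nondegeneracy of a bilinear form. -/
def Nondeg (B : LinearMap.BilinForm ℝ g) : Prop :=
  ∀ v : g, (∀ w : g, B v w = 0) → v = 0

/-- The Gram matrix of a bilinear form in a basis. -/
noncomputable def gram [Fintype ι] (e : Module.Basis ι ℝ g) (B : LinearMap.BilinForm ℝ g) :
    Matrix ι ι ℝ := Matrix.of fun i j => B (e i) (e j)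

/-- The Ricci curvature `ric(v,w) = ½⟨dv♭, dw♭⟩ − ½⟨ad v, ad w⟩` written in the
coordinates of a basis `e`, where `dα(x,y) = −α(⁅x,y⁆)` and the scalar products on
`Λ²g*` and `g*⊗g` are induced by the dual metric (inverse Gram matrix). -/
noncomputable def ricci [Fintype ι] [DecidableEq ι] (e : Module.Basis ι ℝ g)
    (B : LinearMap.BilinForm ℝ g) (v w : g) : ℝ :=
  (1/2) * ((1/2) * ∑ i, ∑ j, ∑ k, ∑ l,
      (gram e B)⁻¹ i k * (gram e B)⁻¹ j l * (-(B v ⁅e i, e j⁆)) * (-(B w ⁅e k, e l⁆)))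
  - (1/2) * ∑ i, ∑ j, (gram e B)⁻¹ i j * B ⁅v, e i⁆ ⁅w, e j⁆

/-- Ricci-flatness of a metric on a Lie algebra. -/
def IsRicciFlat (B : LinearMap.BilinForm ℝ g) : Prop :=
  ∀ (m : ℕ) (e : Module.Basis (Fin m) ℝ g) (v w : g), ricci e B v w = 0

/-- The Koszul formula characterizing the Levi-Civita connection. -/
def IsLeviCivita (B : LinearMap.BilinForm ℝ g) (nab : g → g → g) : Prop :=
  ∀ u v w : g, 2 * B (nab u v) w = B ⁅u, v⁆ w - B ⁅v, w⁆ u + B ⁅w, u⁆ v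

/-- The curvature `R(u,v)w = ∇_{⁅u,v⁆} w − ∇_u ∇_v w + ∇_v ∇_u w`. -/
def curv (nab : g → g → g) (u v w : g) : g :=
  nab ⁅u, v⁆ w - nab u (nab v w) + nab v (nab u w)

/-- Flatness of a metric on a Lie algebra. -/
def IsFlat (B : LinearMap.BilinForm ℝ g) : Prop :=
  ∃ nab : g → g → g, IsLeviCivita B nab ∧ ∀ u v w : g, curv nab u v w = 0

open Matrix

/-!
In a nice basis the Gram matrix of a `σ`-diagonal metric pairs `e i` only with `e (σ i)`, and so
does its inverse. Both terms of the Ricci formula then reduce to sums of the products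
`B v ⁅e i, e j⁆ * B w ⁅e (σ i), e (σ j)⁆` and of `B ⁅v, e i⁆ ⁅w, e (σ i)⁆`, which vanish by the two
arrow-breaking conditions. Since the Ricci formula is a contraction with the dual metric, its
value does not depend on the basis it is computed in.
-/

section Contraction

variable [Fintype ι] [DecidableEq ι] [FiniteDimensional ℝ g] {B : LinearMap.BilinForm ℝ g}

open LinearMap (trace)

omit [FiniteDimensional ℝ g] in
lemma isUnit_det_gram (e : Module.Basis ι ℝ g) (hB : B.Nondegenerate) :
    IsUnit (gram e B).det := by
  have hgram : gram e B = LinearMap.BilinForm.toMatrix e B := by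
    ext i j
    simp [gram, LinearMap.BilinForm.toMatrix_apply]
  rw [hgram, isUnit_iff_ne_zero]
  exact (LinearMap.BilinForm.nondegenerate_iff_det_ne_zero e).mp hB

omit [FiniteDimensional ℝ g] in
lemma gram_inv_comm (e : Module.Basis ι ℝ g) (hs : IsSymm B) (i j : ι) :
    (gram e B)⁻¹ i j = (gram e B)⁻¹ j i := by
  have hT : (gram e B)ᵀ = gram e B := by
    ext i j
    exact hs (e j) (e i)
  rw [← transpose_apply (gram e B)⁻¹ i j, transpose_nonsing_inv, hT]

lemma toDual_symm_eq_sum (e : Module.Basis ι ℝ g) (hB : B.Nondegenerate) (hs : IsSymm B)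
    (α : Module.Dual ℝ g) :
    (B.toDual hB).symm α = ∑ i, ∑ j, ((gram e B)⁻¹ i j * α (e j)) • e i := by
  apply (B.toDual hB).injective
  refine e.ext fun k => ?_
  have hdelta : ∀ j, ∑ i, (gram e B)⁻¹ i j * B (e i) (e k) = (1 : Matrix ι ι ℝ) j k := by
    intro j
    rw [← nonsing_inv_mul _ (isUnit_det_gram e hB), mul_apply]
    exact Finset.sum_congr rfl fun i _ => by rw [gram_inv_comm e hs]; rfl
  simp only [LinearEquiv.apply_symm_apply, map_sum, map_smul, LinearMap.coe_sum,
    Finset.sum_apply, LinearMap.smul_apply, smul_eq_mul, LinearMap.BilinForm.toDual_def]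
  rw [Finset.sum_comm]
  simp_rw [mul_right_comm _ (α _), ← Finset.sum_mul, hdelta, one_apply, ite_mul, one_mul,
    zero_mul, Finset.sum_ite_eq', Finset.mem_univ, if_true]

lemma sum_gram_inv_mul_eq_trace (e : Module.Basis ι ℝ g) (hB : B.Nondegenerate) (hs : IsSymm B)
    (F : g →ₗ[ℝ] Module.Dual ℝ g) :
    ∑ i, ∑ j, (gram e B)⁻¹ i j * F (e i) (e j)
      = trace ℝ g ((B.toDual hB).symm.toLinearMap ∘ₗ F) := by
  rw [LinearMap.trace_eq_matrix_trace ℝ e, Matrix.trace]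
  refine Finset.sum_congr rfl fun k _ => ?_
  rw [diag_apply, LinearMap.toMatrix_apply, LinearMap.comp_apply, LinearEquiv.coe_coe,
    toDual_symm_eq_sum e hB hs]
  simp only [map_sum, map_smul, Module.Basis.repr_self, Finset.sum_apply', Finsupp.smul_apply,
    Finsupp.single_apply, smul_eq_mul, mul_ite, mul_one, mul_zero]
  rw [Finset.sum_comm]
  simp

lemma sum_gram_inv_mul_mul_eq (e : Module.Basis ι ℝ g) (hB : B.Nondegenerate) (hs : IsSymm B)
    (α β : Module.Dual ℝ g) :
    ∑ i, ∑ j, (gram e B)⁻¹ i j * α (e i) * β (e j) = α ((B.toDual hB).symm β) := by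
  have hrank : (B.toDual hB).symm.toLinearMap ∘ₗ α.smulRight β
      = α.smulRight ((B.toDual hB).symm β) := by
    ext x
    simp
  simpa only [LinearMap.smulRight_apply, LinearMap.smul_apply, smul_eq_mul, mul_assoc, hrank,
    LinearMap.trace_smulRight] using sum_gram_inv_mul_eq_trace e hB hs (α.smulRight β)

/-- `-(dv♭)` for `v♭ = B v`. -/
noncomputable def bracketForm (B : LinearMap.BilinForm ℝ g) (v : g) : g →ₗ[ℝ] Module.Dual ℝ g :=
  (LieAlgebra.ad ℝ g : g →ₗ[ℝ] Module.End ℝ g).compr₂ (B v)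

lemma ricci_eq_trace (e : Module.Basis ι ℝ g) (hB : B.Nondegenerate) (hs : IsSymm B) (v w : g) :
    ricci e B v w
      = (1/4) * trace ℝ g ((B.toDual hB).symm.toLinearMap ∘ₗ
          (bracketForm B v).compl₂ ((B.toDual hB).symm.toLinearMap ∘ₗ bracketForm B w))
      - (1/2) * trace ℝ g ((B.toDual hB).symm.toLinearMap ∘ₗ
          B.compl₁₂ (LieAlgebra.ad ℝ g v) (LieAlgebra.ad ℝ g w)) := by
  have hinner : ∀ i k, ∑ j, ∑ l, (gram e B)⁻¹ j l * B v ⁅e i, e j⁆ * B w ⁅e k, e l⁆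
      = (bracketForm B v).compl₂ ((B.toDual hB).symm.toLinearMap ∘ₗ bracketForm B w)
          (e i) (e k) :=
    fun i k => sum_gram_inv_mul_mul_eq e hB hs (bracketForm B v (e i)) (bracketForm B w (e k))
  have hquartic : ∑ i, ∑ j, ∑ k, ∑ l, (gram e B)⁻¹ i k * (gram e B)⁻¹ j l
        * (-(B v ⁅e i, e j⁆)) * (-(B w ⁅e k, e l⁆))
      = ∑ i, ∑ k, (gram e B)⁻¹ i k * (bracketForm B v).compl₂
          ((B.toDual hB).symm.toLinearMap ∘ₗ bracketForm B w) (e i) (e k) := by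
    refine Finset.sum_congr rfl fun i _ => ?_
    rw [Finset.sum_comm]
    refine Finset.sum_congr rfl fun k _ => ?_
    rw [← hinner, Finset.mul_sum]
    refine Finset.sum_congr rfl fun j _ => ?_
    rw [Finset.mul_sum]
    exact Finset.sum_congr rfl fun l _ => by ring
  rw [← sum_gram_inv_mul_eq_trace e hB hs, ← sum_gram_inv_mul_eq_trace e hB hs, ← hquartic]
  simp only [ricci, LinearMap.compl₁₂_apply, LieAlgebra.ad_apply]
  ring

end Contraction

section ArrowBreaking

variable [DecidableEq ι] {e : Module.Basis ι ℝ g} {σ : Equiv.Perm ι}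
  {B : LinearMap.BilinForm ℝ g}

lemma apply_basis_of_isSigmaDiagonal (hσ : ∀ i, σ (σ i) = i) {gv : ι → ℝ}
    (hBe : ∀ i j, B (e i) (e (σ j)) = if i = j then gv i else 0) (i j : ι) :
    B (e i) (e j) = if j = σ i then gv i else 0 := by
  have hj : ∀ i, (i = σ j ↔ j = σ i) := fun i => ⟨fun h => by rw [h, hσ], fun h => by rw [h, hσ]⟩
  rw [← hσ j, hBe, hσ]
  exact if_congr (hj i) rfl rfl

lemma gram_inv_eq_zero_of_ne [Fintype ι] (hσ : ∀ i, σ (σ i) = i) (hdiag : IsSigmaDiagonal e σ B)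
    {i j : ι} (hij : j ≠ σ i) : (gram e B)⁻¹ i j = 0 := by
  obtain ⟨gv, hgv0, hgvσ, hBe⟩ := hdiag
  let H : Matrix ι ι ℝ := Matrix.of fun i j => if j = σ i then (gv i)⁻¹ else 0
  have hGH : gram e B * H = 1 := by
    ext i k
    rw [mul_apply, Finset.sum_eq_single (σ i) (fun j _ hj => ?_) (by simp)]
    · simp only [gram, H, of_apply, apply_basis_of_isSigmaDiagonal hσ hBe, if_true, hσ, hgvσ,
        one_apply, eq_comm (a := k)]
      split_ifs <;> simp [hgv0]
    · simp [gram, apply_basis_of_isSigmaDiagonal hσ hBe, hj]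
  rw [inv_eq_right_inv hGH]
  simp [H, hij]

omit [DecidableEq ι] in
lemma apply_lie_mul_apply_lie_eq_zero (hnice : IsNiceBasis e) (hab : IsArrowBreaking (⇑e) σ)
    (v w : g) (i j : ι) : B v ⁅e i, e j⁆ * B w ⁅e (σ i), e (σ j)⁆ = 0 := by
  obtain ⟨k, c, hk⟩ := hnice.1 i j
  obtain ⟨m, c', hm⟩ := hnice.1 (σ i) (σ j)
  by_cases hc : c = 0
  · simp [hk, hc]
  by_cases hc' : c' = 0
  · simp [hm, hc']
  exact absurd ⟨c', hc', hm⟩ (hab.2.2 i j k ⟨c, hc, hk⟩ m)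

lemma apply_basis_lie_lie_eq_zero (hnice : IsNiceBasis e) (hab : IsArrowBreaking (⇑e) σ)
    (hdiag : IsSigmaDiagonal e σ B) (a b i : ι) : B ⁅e a, e i⁆ ⁅e b, e (σ i)⁆ = 0 := by
  obtain ⟨gv, -, -, hBe⟩ := hdiag
  obtain ⟨k, c, hk⟩ := hnice.1 a i
  obtain ⟨k', c', hk'⟩ := hnice.1 b (σ i)
  by_cases hc : c = 0
  · simp [hk, hc]
  by_cases hc' : c' = 0
  · simp [hk', hc']
  have hk'k : k' ≠ σ k := by
    rintro rfl
    exact hab.2.1 a i k ⟨c, hc, hk⟩ b ⟨c', hc', hk'⟩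
  simp [hk, hk', apply_basis_of_isSigmaDiagonal hab.1 hBe, hk'k]

lemma apply_lie_lie_eq_zero (hnice : IsNiceBasis e) (hab : IsArrowBreaking (⇑e) σ)
    (hdiag : IsSigmaDiagonal e σ B) (v w : g) (i : ι) : B ⁅v, e i⁆ ⁅w, e (σ i)⁆ = 0 := by
  have hform : B.compl₁₂ ((LieAlgebra.ad ℝ g : g →ₗ[ℝ] Module.End ℝ g).flip (e i))
      ((LieAlgebra.ad ℝ g : g →ₗ[ℝ] Module.End ℝ g).flip (e (σ i))) = 0 :=
    LinearMap.ext_basis e e fun a b => apply_basis_lie_lie_eq_zero hnice hab hdiag a b i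
  exact LinearMap.congr_fun₂ hform v w

lemma ricci_eq_zero_of_isArrowBreaking [Fintype ι] (hnice : IsNiceBasis e)
    (hab : IsArrowBreaking (⇑e) σ) (hdiag : IsSigmaDiagonal e σ B) (v w : g) :
    ricci e B v w = 0 := by
  have hquartic : ∀ i j k l, (gram e B)⁻¹ i k * (gram e B)⁻¹ j l
      * (-(B v ⁅e i, e j⁆)) * (-(B w ⁅e k, e l⁆)) = 0 := by
    intro i j k l
    by_cases hk : k = σ i
    · by_cases hl : l = σ j
      · subst hk hl
        linear_combination (gram e B)⁻¹ i (σ i) * (gram e B)⁻¹ j (σ j)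
          * apply_lie_mul_apply_lie_eq_zero hnice hab v w i j
      · simp [gram_inv_eq_zero_of_ne hab.1 hdiag hl]
    · simp [gram_inv_eq_zero_of_ne hab.1 hdiag hk]
  have hquadratic : ∀ i j, (gram e B)⁻¹ i j * B ⁅v, e i⁆ ⁅w, e j⁆ = 0 := by
    intro i j
    by_cases hj : j = σ i
    · simp [hj, apply_lie_lie_eq_zero hnice hab hdiag]
    · simp [gram_inv_eq_zero_of_ne hab.1 hdiag hj]
  simp only [ricci, hquartic, hquadratic, Finset.sum_const_zero, mul_zero, sub_zero]

end ArrowBreaking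

theorem statement0_general {n : ℕ} {g : Type*} [LieRing g] [LieAlgebra ℝ g]
    (e : Module.Basis (Fin n) ℝ g) (hnice : IsNiceBasis e)
    (σ : Equiv.Perm (Fin n)) (hab : IsArrowBreaking (⇑e) σ)
    (B : LinearMap.BilinForm ℝ g) (hsymm : IsSymm B) (hnd : Nondeg B)
    (hdiag : IsSigmaDiagonal e σ B) :
    IsRicciFlat B := by
  have : FiniteDimensional ℝ g := e.finiteDimensional_of_finite
  have hB : B.Nondegenerate :=
    (LinearMap.IsRefl.nondegenerate_iff_separatingLeft fun x y h => (hsymm y x).trans h).mpr hnd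
  intro m e' v w
  rw [ricci_eq_trace e' hB hsymm, ← ricci_eq_trace e hB hsymm]
  exact ricci_eq_zero_of_isArrowBreaking hnice hab hdiag v w

/-- On a finite-dimensional real nilpotent Lie algebra with a nice basis,
every `σ`-diagonal metric associated to an arrow-breaking involution `σ` is Ricci-flat. -/
theorem statement0 {n : ℕ} {g : Type*} [LieRing g] [LieAlgebra ℝ g]
    [LieRing.IsNilpotent g]
    (e : Module.Basis (Fin n) ℝ g) (hnice : IsNiceBasis e)
    (σ : Equiv.Perm (Fin n)) (hab : IsArrowBreaking (⇑e) σ)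
    (B : LinearMap.BilinForm ℝ g) (hsymm : IsSymm B) (hnd : Nondeg B)
    (hdiag : IsSigmaDiagonal e σ B) :
    IsRicciFlat B :=
  statement0_general e hnice σ hab B hsymm hnd hdiag

end ArrowBreakingPaper
end

section
/- Let g be a finite-dimensional real nilpotent Lie algebra with a nice basis {e_1,…,e_n}, let σ be an arrow-breaking involution of this basis, and let ⟨·,·⟩ be a σ-diagonal metric on g. Then the bilinear form induced by ⟨·,·⟩ on g*⊗g ≅ End(g) vanishes identically on the subspace ad(g) = {ad x : x ∈ g} (that is, ⟨ad x, ad y⟩ = 0 for all x,y ∈ g), and the bilinear form induced by ⟨·,·⟩ on Λ²g* vanishes identically on the subspace d(g*) = {dα : α ∈ g*} (that is, ⟨dα, dβ⟩ = 0 for all α,β ∈ g*). -/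
open scoped BigOperators

namespace ArrowBreakingPaper

variable {ι : Type*} {g : Type*} [LieRing g] [LieAlgebra ℝ g]

/-! In the basis `e` the inverse Gram matrix pairs the index `i` only with `σ i`, so the two
forms reduce to sums of terms `⟨⁅x, e i⁆, ⁅y, e (σ i)⁆⟩` and
`α ⁅e i, e j⁆ * β ⁅e (σ i), e (σ j)⁆`. Condition (1) makes the first vanish: the two brackets
are multiples of `e k` and `e k'` with `k' ≠ σ k`, which are orthogonal. Condition (2) makes the
second vanish: one of the two brackets is zero. -/

section SigmaDiagonal

variable {ι : Type*} [DecidableEq ι] {e : Module.Basis ι ℝ g} {σ : Equiv.Perm ι}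
  {B : LinearMap.BilinForm ℝ g}

theorem IsSigmaDiagonal.apply_basis_eq_zero (hσ : ∀ i, σ (σ i) = i)
    (hB : IsSigmaDiagonal e σ B) {i j : ι} (hij : i ≠ σ j) : B (e i) (e j) = 0 := by
  obtain ⟨gv, -, -, hB⟩ := hB
  simpa [hσ, hij] using hB i (σ j)

theorem IsSigmaDiagonal.inv_gram_apply_eq_zero [Fintype ι] (hσ : ∀ i, σ (σ i) = i)
    (hB : IsSigmaDiagonal e σ B) {i j : ι} (hij : σ i ≠ j) : (gram e B)⁻¹ i j = 0 := by
  obtain ⟨gv, hgv0, hgvσ, hBe⟩ := hB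
  have hgram : ∀ i j, gram e B i j = if i = σ j then gv i else 0 := fun i j => by
    simpa [gram, hσ] using hBe i (σ j)
  -- the Gram matrix is supported on the graph of `σ`; as `gv ∘ σ = gv`, so is its inverse
  have hinv : (gram e B)⁻¹ = Matrix.of fun i j => if σ i = j then (gv i)⁻¹ else 0 := by
    refine Matrix.inv_eq_right_inv (Matrix.ext fun i j => ?_)
    rw [Matrix.mul_apply, Finset.sum_eq_single (σ i)]
    · rcases eq_or_ne i j with rfl | h
      · simp [hgram, hσ, hgvσ, hgv0]
      · simp [hgram, hσ, h]
    · intro k _ hk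
      have : i ≠ σ k := fun h => hk (by rw [h, hσ])
      simp [hgram, this]
    · simp
  simp [hinv, hij]

end SigmaDiagonal

section ArrowBreaking

variable {ι : Type*} {e : Module.Basis ι ℝ g} {σ : Equiv.Perm ι}

theorem IsNiceBasis.lie_eq_zero_or_arrow (hnice : IsNiceBasis e) (i j : ι) :
    ⁅e i, e j⁆ = 0 ∨ ∃ k, Arrow e i j k := by
  obtain ⟨k, c, hc⟩ := hnice.1 i j
  rcases eq_or_ne c 0 with rfl | hc0
  · exact Or.inl (by rw [hc, zero_smul])
  · exact Or.inr ⟨k, c, hc0, hc⟩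

theorem IsArrowBreaking.lie_eq_zero_or_lie_eq_zero (hnice : IsNiceBasis e)
    (hab : IsArrowBreaking e σ) (i j : ι) : ⁅e i, e j⁆ = 0 ∨ ⁅e (σ i), e (σ j)⁆ = 0 := by
  rcases hnice.lie_eq_zero_or_arrow i j with h | ⟨k, hk⟩
  · exact Or.inl h
  rcases hnice.lie_eq_zero_or_arrow (σ i) (σ j) with h' | ⟨m, hm⟩
  · exact Or.inr h'
  · exact absurd hm (hab.2.2 i j k hk m)

theorem IsArrowBreaking.apply_lie_basis_eq_zero [DecidableEq ι] {B : LinearMap.BilinForm ℝ g}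
    (hnice : IsNiceBasis e) (hab : IsArrowBreaking e σ) (hB : IsSigmaDiagonal e σ B)
    (a i b : ι) : B ⁅e a, e i⁆ ⁅e b, e (σ i)⁆ = 0 := by
  rcases hnice.lie_eq_zero_or_arrow a i with h | ⟨k, c, hc0, hc⟩
  · simp [h]
  rcases hnice.lie_eq_zero_or_arrow b (σ i) with h' | ⟨k', c', hc0', hc'⟩
  · simp [h']
  -- by condition (1) the arrow `e b →^{e (σ i)} e k'` cannot end in `e (σ k)`
  have hkk' : k ≠ σ k' := by
    rintro rfl
    exact hab.2.1 a i _ ⟨c, hc0, hc⟩ b (by rw [hab.1]; exact ⟨c', hc0', hc'⟩)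
  simp [hc, hc', hB.apply_basis_eq_zero hab.1 hkk']

theorem IsArrowBreaking.apply_lie_eq_zero [DecidableEq ι] {B : LinearMap.BilinForm ℝ g}
    (hnice : IsNiceBasis e) (hab : IsArrowBreaking e σ) (hB : IsSigmaDiagonal e σ B)
    (i : ι) (x y : g) : B ⁅x, e i⁆ ⁅y, e (σ i)⁆ = 0 := by
  have hswap (u v : g) : B ⁅u, e i⁆ ⁅v, e (σ i)⁆ = B ⁅e i, u⁆ ⁅e (σ i), v⁆ := by
    rw [← lie_skew (e i) u, ← lie_skew (e (σ i)) v, LinearMap.map_neg₂, map_neg, neg_neg]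
  have hzero : B.compl₁₂ (LieAlgebra.ad ℝ g (e i)) (LieAlgebra.ad ℝ g (e (σ i))) = 0 :=
    LinearMap.ext_basis e e fun a b => by
      simpa [hswap] using hab.apply_lie_basis_eq_zero hnice hB a i b
  simpa [hswap] using LinearMap.congr_fun₂ hzero x y

end ArrowBreaking

theorem statement1_general {n : ℕ} {g : Type*} [LieRing g] [LieAlgebra ℝ g]
    (e : Module.Basis (Fin n) ℝ g) (hnice : IsNiceBasis e)
    (σ : Equiv.Perm (Fin n)) (hab : IsArrowBreaking (⇑e) σ)
    (B : LinearMap.BilinForm ℝ g)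
    (hdiag : IsSigmaDiagonal e σ B) :
    (∀ x y : g,
      ∑ i, ∑ j, (gram e B)⁻¹ i j * B ⁅x, e i⁆ ⁅y, e j⁆ = 0) ∧
    (∀ α β : Module.Dual ℝ g,
      (1/2 : ℝ) * ∑ i, ∑ j, ∑ k, ∑ l,
        (gram e B)⁻¹ i k * (gram e B)⁻¹ j l *
          (-(α ⁅e i, e j⁆)) * (-(β ⁅e k, e l⁆)) = 0) := by
  have hinv {i j} (h : σ i ≠ j) := hdiag.inv_gram_apply_eq_zero hab.1 h
  refine ⟨fun x y => ?_, fun α β => ?_⟩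
  · refine Finset.sum_eq_zero fun i _ => Finset.sum_eq_zero fun j _ => ?_
    rcases eq_or_ne (σ i) j with rfl | h
    · rw [hab.apply_lie_eq_zero hnice hdiag, mul_zero]
    · rw [hinv h, zero_mul]
  · refine mul_eq_zero_of_right _ (Finset.sum_eq_zero fun i _ => Finset.sum_eq_zero fun j _ =>
      Finset.sum_eq_zero fun k _ => Finset.sum_eq_zero fun l _ => ?_)
    rcases eq_or_ne (σ i) k with rfl | hk
    · rcases eq_or_ne (σ j) l with rfl | hl
      · rcases hab.lie_eq_zero_or_lie_eq_zero hnice i j with h | h <;> simp [h]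
      · simp [hinv hl]
    · simp [hinv hk]

/-- For a `σ`-diagonal metric associated to an arrow-breaking involution of a
nice basis, the induced bilinear form on `g*⊗g` vanishes on `ad(g)` and the induced bilinear
form on `Λ²g*` vanishes on `d(g*)`. -/
theorem statement1 {n : ℕ} {g : Type*} [LieRing g] [LieAlgebra ℝ g]
    [LieRing.IsNilpotent g]
    (e : Module.Basis (Fin n) ℝ g) (hnice : IsNiceBasis e)
    (σ : Equiv.Perm (Fin n)) (hab : IsArrowBreaking (⇑e) σ)
    (B : LinearMap.BilinForm ℝ g) (hsymm : IsSymm B) (hnd : Nondeg B)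
    (hdiag : IsSigmaDiagonal e σ B) :
    (∀ x y : g,
      ∑ i, ∑ j, (gram e B)⁻¹ i j * B ⁅x, e i⁆ ⁅y, e j⁆ = 0) ∧
    (∀ α β : Module.Dual ℝ g,
      (1/2 : ℝ) * ∑ i, ∑ j, ∑ k, ∑ l,
        (gram e B)⁻¹ i k * (gram e B)⁻¹ j l *
          (-(α ⁅e i, e j⁆)) * (-(β ⁅e k, e l⁆)) = 0) :=
  statement1_general e hnice σ hab B hdiag

end ArrowBreakingPaper
end

section
/- Let (g,⟨·,·⟩) be a finite-dimensional real Lie algebra with a nondegenerate symmetric bilinear form. Fix a basis {e_1,…,e_p} of the commutator ideal g' = [g,g] and elements x_1,…,x_p ∈ g with ⟨e_i,x_j⟩ = δ_{ij}, and for i = 1,…,p define the endomorphism J_i of g by ⟨J_i u, v⟩ = ⟨[u,v], x_i⟩ for all u,v ∈ g. Then the Levi-Civita connection ∇ of (g,⟨·,·⟩) satisfies, for all u,v ∈ g: 2∇_u v = Σ_{i=1}^p ( ⟨J_i u, v⟩ e_i − ⟨e_i, v⟩ J_i u − ⟨e_i, u⟩ J_i v ). -/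
open scoped BigOperators

namespace ArrowBreakingPaper

variable {ι : Type*} {g : Type*} [LieRing g] [LieAlgebra ℝ g]

section DualFamily

variable {ι M : Type*} [Fintype ι] [DecidableEq ι] [AddCommGroup M] [Module ℝ M]
  {B : LinearMap.BilinForm ℝ M} {e x : ι → M}

theorem eq_sum_apply_smul_of_mem_span (hx : ∀ i j, B (e i) (x j) = if i = j then 1 else 0)
    {z : M} (hz : z ∈ Submodule.span ℝ (Set.range e)) : z = ∑ i, B z (x i) • e i := by
  obtain ⟨c, rfl⟩ := (Submodule.mem_span_range_iff_exists_fun ℝ).1 hz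
  simp [hx]

theorem apply_eq_sum_of_mem_span (hx : ∀ i j, B (e i) (x j) = if i = j then 1 else 0)
    {z : M} (hz : z ∈ Submodule.span ℝ (Set.range e)) (w : M) :
    B z w = ∑ i, B z (x i) * B (e i) w := by
  conv_lhs => rw [eq_sum_apply_smul_of_mem_span hx hz]
  simp

end DualFamily

theorem eq_of_forall_apply_eq {g : Type*} [LieRing g] [LieAlgebra ℝ g]
    {B : LinearMap.BilinForm ℝ g} (hnd : Nondeg B) {a b : g} (h : ∀ w, B a w = B b w) :
    a = b :=
  sub_eq_zero.1 <| hnd _ fun w => by simp [h]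

/-- Every bracket lies in `g'`, where `z = ∑ i, ⟨z, x i⟩ e i`, so each term of the Koszul formula
expands in the dual pair `(e, x)`. -/
theorem koszul_eq_sum {g : Type*} [LieRing g] [LieAlgebra ℝ g]
    {B : LinearMap.BilinForm ℝ g} {p : ℕ} {e x : Fin p → g}
    (hbr : ∀ a b : g, ⁅a, b⁆ ∈ Submodule.span ℝ (Set.range e))
    (hx : ∀ i j, B (e i) (x j) = if i = j then 1 else 0)
    {J : Fin p → g →ₗ[ℝ] g} (hJ : ∀ i (u v : g), B (J i u) v = B ⁅u, v⁆ (x i))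
    (u v w : g) :
    B ⁅u, v⁆ w - B ⁅v, w⁆ u + B ⁅w, u⁆ v =
      ∑ i, (B (J i u) v * B (e i) w - B (e i) v * B (J i u) w - B (e i) u * B (J i v) w) := by
  rw [apply_eq_sum_of_mem_span hx (hbr u v), apply_eq_sum_of_mem_span hx (hbr v w),
    ← lie_skew w u, map_neg, LinearMap.neg_apply, apply_eq_sum_of_mem_span hx (hbr u w),
    ← sub_eq_add_neg, ← Finset.sum_sub_distrib, ← Finset.sum_sub_distrib]
  refine Finset.sum_congr rfl fun i _ => ?_
  rw [hJ, hJ, hJ]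
  ring

theorem statement2_general {g : Type*} [LieRing g] [LieAlgebra ℝ g]
    (B : LinearMap.BilinForm ℝ g) (hnd : Nondeg B)
    {p : ℕ} (e : Fin p → g) (x : Fin p → g)
    (hspan : Submodule.span ℝ (Set.range e) =
      Submodule.span ℝ {z : g | ∃ u v : g, z = ⁅u, v⁆})
    (hx : ∀ i j, B (e i) (x j) = if i = j then 1 else 0)
    (J : Fin p → g →ₗ[ℝ] g)
    (hJ : ∀ i (u v : g), B (J i u) v = B ⁅u, v⁆ (x i))
    (nab : g → g → g) (hnab : IsLeviCivita B nab) :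
    ∀ u v : g, (2 : ℝ) • nab u v =
      ∑ i, (B (J i u) v • e i - B (e i) v • J i u - B (e i) u • J i v) := by
  intro u v
  have hbr (a b : g) : ⁅a, b⁆ ∈ Submodule.span ℝ (Set.range e) :=
    hspan ▸ Submodule.subset_span ⟨a, b, rfl⟩
  refine eq_of_forall_apply_eq hnd fun w => ?_
  have koszul := hnab u v w
  rw [koszul_eq_sum hbr hx hJ] at koszul
  simpa [smul_eq_mul] using koszul

/-- Koszul formula for the Levi-Civita connection of a metric Lie algebra in
terms of the maps `J i`. -/
theorem statement2 {g : Type*} [LieRing g] [LieAlgebra ℝ g]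
    (B : LinearMap.BilinForm ℝ g) (hsymm : IsSymm B) (hnd : Nondeg B)
    {p : ℕ} (e : Fin p → g) (x : Fin p → g)
    (hind : LinearIndependent ℝ e)
    (hspan : Submodule.span ℝ (Set.range e) =
      Submodule.span ℝ {z : g | ∃ u v : g, z = ⁅u, v⁆})
    (hx : ∀ i j, B (e i) (x j) = if i = j then 1 else 0)
    (J : Fin p → g →ₗ[ℝ] g)
    (hJ : ∀ i (u v : g), B (J i u) v = B ⁅u, v⁆ (x i))
    (nab : g → g → g) (hnab : IsLeviCivita B nab) :
    ∀ u v : g, (2 : ℝ) • nab u v =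
      ∑ i, (B (J i u) v • e i - B (e i) v • J i u - B (e i) u • J i v) :=
  statement2_general B hnd e x hspan hx J hJ nab hnab

end ArrowBreakingPaper
end

section
/- Let (g,⟨·,·⟩) be a finite-dimensional real Lie algebra with a nondegenerate symmetric bilinear form. Fix a basis {e_1,…,e_p} of g' = [g,g] and elements x_1,…,x_p ∈ g with ⟨e_i,x_j⟩ = δ_{ij}, and define J_i ∈ End(g) by ⟨J_i u, v⟩ = ⟨[u,v], x_i⟩. Then for all u,v,w ∈ g the curvature tensor satisfies: R(u,v)w = Σ_{i,j=1}^p ⟨e_i,e_j⟩ ( (1/4)⟨J_i v,w⟩ J_j u − (1/4)⟨J_i u,w⟩ J_j v − (1/2)⟨J_i u,v⟩ J_j w ) + (1/4) Σ_{i,j=1}^p ( ⟨e_i,w⟩⟨e_j,v⟩ J_j(J_i u) − ⟨e_i,w⟩⟨e_j,u⟩ J_j(J_i v) + ⟨e_i,u⟩⟨e_j,v⟩ (J_j∘J_i − J_i∘J_j)(w) ) + (1/4) Σ_{i,j=1}^p ( ⟨e_i,w⟩⟨(J_j∘J_i − J_i∘J_j)(u), v⟩ + ⟨e_i,v⟩⟨J_j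 u, J_i w⟩ − ⟨e_i,u⟩⟨J_j v, J_i w⟩ ) e_j − (1/4)[w,[u,v]] + Σ_{j=1}^p ( −(1/2)⟨w,e_j⟩ J_j([u,v]) + (1/4)⟨e_j,u⟩ J_j([v,w]) − (1/4)⟨v,e_j⟩ J_j([u,w]) ) − (1/4) Σ_{j=1}^p ( ⟨[v,e_j],w⟩ + ⟨[w,e_j],v⟩ ) J_j u + (1/4) Σ_{j=1}^p ( ⟨[u,e_j],w⟩ + ⟨[w,e_j],u⟩ ) J_j v. -/
open scoped BigOperators

namespace ArrowBreakingPaper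

variable {ι : Type*} {g : Type*} [LieRing g] [LieAlgebra ℝ g]

/-!
Since `span (range e) = g'` and `x` is dual to `e`, every bracket expands as
`⁅y, z⁆ = ∑ i, ⟨J i y, z⟩ e i`, and each `J i` is skew. Feeding this into the Koszul formula gives
`∇_y z = ½ (⁅y, z⁆ - S(y, z))` for the symmetric bilinear map
`S(y, z) = ∑ i, (⟨e i, y⟩ J i z + ⟨e i, z⟩ J i y)` (`jSymm`). For a connection of this shape
the Jacobi identity reduces the curvature to `-¼ ⁅w, ⁅u, v⁆⁆` plus terms in `S`, and each of those is
expanded once more through the bracket formula.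
-/

theorem IsLeviCivita.unique {B : LinearMap.BilinForm ℝ g} (hnd : Nondeg B) {nab nab' : g → g → g}
    (h : IsLeviCivita B nab) (h' : IsLeviCivita B nab') : nab = nab' := by
  funext y z
  refine sub_eq_zero.mp (hnd _ fun t => ?_)
  have := h y z t
  have := h' y z t
  simp only [map_sub, LinearMap.sub_apply]
  linarith

theorem curv_half_lie_sub (S : g → g →ₗ[ℝ] g) (u v w : g) :
    curv (fun y z => (1/2 : ℝ) • (⁅y, z⁆ - S y z)) u v w =
      - (1/4 : ℝ) • ⁅w, ⁅u, v⁆⁆ - (1/2 : ℝ) • S ⁅u, v⁆ w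
      + (1/4 : ℝ) • (S u ⁅v, w⁆ - S v ⁅u, w⁆) + (1/4 : ℝ) • (⁅u, S v w⁆ - ⁅v, S u w⁆)
      - (1/4 : ℝ) • (S u (S v w) - S v (S u w)) := by
  have jacobi : ⁅⁅u, v⁆, w⁆ = ⁅u, ⁅v, w⁆⁆ - ⁅v, ⁅u, w⁆⁆ := lie_lie u v w
  rw [← lie_skew w ⁅u, v⁆]
  simp only [curv, map_smul, map_sub, lie_smul, lie_sub, jacobi]
  module

theorem skew_of_apply_eq_lie {B : LinearMap.BilinForm ℝ g} {J : ι → g →ₗ[ℝ] g} {x : ι → g}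
    (hJ : ∀ i (y z : g), B (J i y) z = B ⁅y, z⁆ (x i)) (i : ι) (y z : g) :
    B (J i y) z = -B (J i z) y := by
  rw [hJ, hJ, ← lie_skew z y, map_neg, LinearMap.neg_apply, neg_neg]

theorem lie_eq_sum_of_dual [Fintype ι] [DecidableEq ι] {B : LinearMap.BilinForm ℝ g}
    {e : ι → g} {J : ι → g →ₗ[ℝ] g} {x : ι → g}
    (hmem : ∀ y z : g, ⁅y, z⁆ ∈ Submodule.span ℝ (Set.range e))
    (hx : ∀ i j, B (e i) (x j) = if i = j then 1 else 0)
    (hJ : ∀ i (y z : g), B (J i y) z = B ⁅y, z⁆ (x i)) (y z : g) :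
    ⁅y, z⁆ = ∑ i, B (J i y) z • e i := by
  obtain ⟨c, hc⟩ := (Submodule.mem_span_range_iff_exists_fun ℝ).mp (hmem y z)
  have hcoeff : ∀ i, B (J i y) z = c i := fun i => by
    simp [hJ, ← hc, hx]
  simp only [hcoeff, hc]

section

variable [Fintype ι]

def jSymm (B : LinearMap.BilinForm ℝ g) (e : ι → g) (J : ι → g →ₗ[ℝ] g) :
    g →ₗ[ℝ] g →ₗ[ℝ] g :=
  ∑ i, ((B (e i)).smulRight (J i) + ((B (e i)).smulRight (J i)).flip)

variable {B : LinearMap.BilinForm ℝ g} {e : ι → g} {J : ι → g →ₗ[ℝ] g}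

theorem jSymm_apply (y z : g) :
    jSymm B e J y z = ∑ i, (B (e i) y • J i z + B (e i) z • J i y) := by
  simp [jSymm, LinearMap.sum_apply]

theorem jSymm_comm (y z : g) : jSymm B e J y z = jSymm B e J z y := by
  simp only [jSymm_apply, add_comm]

theorem isLeviCivita_half_lie_sub_jSymm (hsymm : IsSymm B)
    (hbr : ∀ y z : g, ⁅y, z⁆ = ∑ i, B (J i y) z • e i)
    (hskew : ∀ i (y z : g), B (J i y) z = -B (J i z) y) :
    IsLeviCivita B (fun y z => (1/2 : ℝ) • (⁅y, z⁆ - jSymm B e J y z)) := by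
  intro y z t
  have hzt : B ⁅z, t⁆ y = ∑ i, B (e i) y * B (J i z) t := by
    simp [hbr z t, hsymm _ y, mul_comm]
  have hty : B ⁅t, y⁆ z = ∑ i, -(B (e i) z * B (J i y) t) := by
    simp [hbr t y, hsymm _ z, hskew _ t, mul_comm]
  simp only [hzt, hty, jSymm_apply, map_smul, map_sub, map_sum, map_add, LinearMap.smul_apply,
    LinearMap.sub_apply, LinearMap.sum_apply, LinearMap.add_apply, smul_eq_mul,
    Finset.sum_add_distrib, Finset.sum_neg_distrib]
  ring

theorem jSymm_lie_left (hsymm : IsSymm B) (hbr : ∀ y z : g, ⁅y, z⁆ = ∑ i, B (J i y) z • e i)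
    (y z t : g) :
    jSymm B e J ⁅y, z⁆ t =
      ∑ i, ∑ j, B (e i) (e j) • (B (J i y) z • J j t) + ∑ j, B (e j) t • J j ⁅y, z⁆ := by
  rw [jSymm_apply, Finset.sum_add_distrib]
  congr 1
  conv_lhs => simp only [hbr y z, map_sum, map_smul, smul_eq_mul, Finset.sum_smul]
  rw [Finset.sum_comm]
  refine Finset.sum_congr rfl fun i _ => Finset.sum_congr rfl fun j _ => ?_
  rw [smul_smul, hsymm (e j), mul_comm]

theorem lie_jSymm (hbr : ∀ y z : g, ⁅y, z⁆ = ∑ i, B (J i y) z • e i) (y z t : g) :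
    ⁅y, jSymm B e J z t⁆ =
      ∑ i, ∑ j, (B (e i) z * B (J j y) (J i t) + B (e i) t * B (J j y) (J i z)) • e j := by
  rw [jSymm_apply, lie_sum]
  simp only [lie_add, lie_smul, fun i w => hbr y (J i w), Finset.smul_sum, smul_smul,
    ← Finset.sum_add_distrib, ← add_smul]

theorem apply_jSymm (hsymm : IsSymm B) (hbr : ∀ y z : g, ⁅y, z⁆ = ∑ i, B (J i y) z • e i)
    (i : ι) (z t : g) :
    B (e i) (jSymm B e J z t) = B ⁅z, e i⁆ t + B ⁅t, e i⁆ z := by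
  simp only [jSymm_apply, hbr z (e i), hbr t (e i), map_sum, map_add, map_smul,
    LinearMap.sum_apply, LinearMap.smul_apply, smul_eq_mul, Finset.sum_add_distrib]
  rw [add_comm]
  congr 1 <;> exact Finset.sum_congr rfl fun j _ => by rw [hsymm (e i)]; ring

theorem jSymm_jSymm (hsymm : IsSymm B) (hbr : ∀ y z : g, ⁅y, z⁆ = ∑ i, B (J i y) z • e i)
    (y z t : g) :
    jSymm B e J y (jSymm B e J z t) =
      ∑ i, ∑ j, (B (e i) y * B (e j) z) • J i (J j t)
      + ∑ i, ∑ j, (B (e i) t * B (e j) y) • J j (J i z)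
      + ∑ j, (B ⁅z, e j⁆ t + B ⁅t, e j⁆ z) • J j y := by
  have swap : ∑ i, ∑ j, (B (e i) y * B (e j) t) • J i (J j z)
      = ∑ i, ∑ j, (B (e i) t * B (e j) y) • J j (J i z) := by
    rw [Finset.sum_comm]
    simp only [mul_comm]
  rw [jSymm_apply, Finset.sum_add_distrib]
  simp only [apply_jSymm hsymm hbr]
  simp only [jSymm_apply, map_sum, map_add, map_smul, smul_add, Finset.smul_sum, smul_smul,
    Finset.sum_add_distrib, swap]

theorem jSymm_jSymm_sub (hsymm : IsSymm B) (hbr : ∀ y z : g, ⁅y, z⁆ = ∑ i, B (J i y) z • e i)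
    (u v w : g) :
    jSymm B e J u (jSymm B e J v w) - jSymm B e J v (jSymm B e J u w) =
      ∑ i, ∑ j, ((B (e i) u * B (e j) v) • (J i (J j w) - J j (J i w))
        + (B (e i) w * B (e j) u) • J j (J i v) - (B (e i) w * B (e j) v) • J j (J i u))
      + ∑ j, (B ⁅v, e j⁆ w + B ⁅w, e j⁆ v) • J j u
      - ∑ j, (B ⁅u, e j⁆ w + B ⁅w, e j⁆ u) • J j v := by
  have swap : ∑ i, ∑ j, (B (e i) v * B (e j) u) • J i (J j w)
      = ∑ i, ∑ j, (B (e i) u * B (e j) v) • J j (J i w) := by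
    rw [Finset.sum_comm]
    simp only [mul_comm]
  rw [jSymm_jSymm hsymm hbr, jSymm_jSymm hsymm hbr, swap]
  simp only [smul_sub, Finset.sum_add_distrib, Finset.sum_sub_distrib]
  abel

theorem lie_jSymm_sub (hsymm : IsSymm B) (hbr : ∀ y z : g, ⁅y, z⁆ = ∑ i, B (J i y) z • e i)
    (hskew : ∀ i (y z : g), B (J i y) z = -B (J i z) y) (u v w : g) :
    ⁅u, jSymm B e J v w⁆ - ⁅v, jSymm B e J u w⁆ =
      ∑ i, ∑ j, ((B (e i) w * B (J j (J i u) - J i (J j u)) v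
        + B (e i) v * B (J j u) (J i w) - B (e i) u * B (J j v) (J i w)) • e j) := by
  rw [lie_jSymm hbr, lie_jSymm hbr, ← Finset.sum_sub_distrib]
  refine Finset.sum_congr rfl fun i _ => ?_
  rw [← Finset.sum_sub_distrib]
  refine Finset.sum_congr rfl fun j _ => ?_
  have hcomm : B (J j (J i u) - J i (J j u)) v = B (J j u) (J i v) - B (J j v) (J i u) := by
    rw [map_sub, LinearMap.sub_apply, hskew j (J i u), hskew i (J j u), hsymm (J i v)]
    ring
  rw [← sub_smul, hcomm]
  ring_nf

end

theorem statement3_general {g : Type*} [LieRing g] [LieAlgebra ℝ g]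
    (B : LinearMap.BilinForm ℝ g) (hsymm : IsSymm B) (hnd : Nondeg B)
    {p : ℕ} (e : Fin p → g) (x : Fin p → g)
    (hspan : Submodule.span ℝ (Set.range e) =
      Submodule.span ℝ {z : g | ∃ u v : g, z = ⁅u, v⁆})
    (hx : ∀ i j, B (e i) (x j) = if i = j then 1 else 0)
    (J : Fin p → g →ₗ[ℝ] g)
    (hJ : ∀ i (u v : g), B (J i u) v = B ⁅u, v⁆ (x i))
    (nab : g → g → g) (hnab : IsLeviCivita B nab) :
    ∀ u v w : g, curv nab u v w =
      (∑ i, ∑ j, B (e i) (e j) •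
          ((1/4 * B (J i v) w) • J j u - (1/4 * B (J i u) w) • J j v
            - (1/2 * B (J i u) v) • J j w))
      + (1/4 : ℝ) • (∑ i, ∑ j,
          ((B (e i) w * B (e j) v) • J j (J i u) - (B (e i) w * B (e j) u) • J j (J i v)
            + (B (e i) u * B (e j) v) • (J j (J i w) - J i (J j w))))
      + (1/4 : ℝ) • (∑ i, ∑ j,
          ((B (e i) w * B (J j (J i u) - J i (J j u)) v
            + B (e i) v * B (J j u) (J i w) - B (e i) u * B (J j v) (J i w)) • e j))
      - (1/4 : ℝ) • ⁅w, ⁅u, v⁆⁆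
      + (∑ j, ((-(1/2) * B w (e j)) • J j ⁅u, v⁆ + (1/4 * B (e j) u) • J j ⁅v, w⁆
            - (1/4 * B v (e j)) • J j ⁅u, w⁆))
      - (1/4 : ℝ) • (∑ j, (B ⁅v, e j⁆ w + B ⁅w, e j⁆ v) • J j u)
      + (1/4 : ℝ) • (∑ j, (B ⁅u, e j⁆ w + B ⁅w, e j⁆ u) • J j v) := by
  have hbr : ∀ y z : g, ⁅y, z⁆ = ∑ i, B (J i y) z • e i :=
    lie_eq_sum_of_dual (fun y z => hspan ▸ Submodule.subset_span ⟨y, z, rfl⟩) hx hJ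
  rw [IsLeviCivita.unique hnd hnab
    (isLeviCivita_half_lie_sub_jSymm hsymm hbr (skew_of_apply_eq_lie hJ))]
  intro u v w
  rw [curv_half_lie_sub, jSymm_comm u, jSymm_comm v, jSymm_lie_left hsymm hbr,
    jSymm_lie_left hsymm hbr, jSymm_lie_left hsymm hbr, jSymm_jSymm_sub hsymm hbr,
    lie_jSymm_sub hsymm hbr (skew_of_apply_eq_lie hJ)]
  have hw : ∀ j, B w (e j) = B (e j) w := fun j => hsymm _ _
  have hv : ∀ j, B v (e j) = B (e j) v := fun j => hsymm _ _
  simp only [hw, hv, smul_add, smul_sub, Finset.smul_sum, smul_smul, Finset.sum_add_distrib,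
    Finset.sum_sub_distrib, neg_mul, neg_smul, Finset.sum_neg_distrib, mul_left_comm]
  abel

/-- The curvature tensor of a metric Lie algebra in terms of the maps `J i`. -/
theorem statement3 {g : Type*} [LieRing g] [LieAlgebra ℝ g]
    (B : LinearMap.BilinForm ℝ g) (hsymm : IsSymm B) (hnd : Nondeg B)
    {p : ℕ} (e : Fin p → g) (x : Fin p → g)
    (hind : LinearIndependent ℝ e)
    (hspan : Submodule.span ℝ (Set.range e) =
      Submodule.span ℝ {z : g | ∃ u v : g, z = ⁅u, v⁆})
    (hx : ∀ i j, B (e i) (x j) = if i = j then 1 else 0)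
    (J : Fin p → g →ₗ[ℝ] g)
    (hJ : ∀ i (u v : g), B (J i u) v = B ⁅u, v⁆ (x i))
    (nab : g → g → g) (hnab : IsLeviCivita B nab) :
    ∀ u v w : g, curv nab u v w =
      (∑ i, ∑ j, B (e i) (e j) •
          ((1/4 * B (J i v) w) • J j u - (1/4 * B (J i u) w) • J j v
            - (1/2 * B (J i u) v) • J j w))
      + (1/4 : ℝ) • (∑ i, ∑ j,
          ((B (e i) w * B (e j) v) • J j (J i u) - (B (e i) w * B (e j) u) • J j (J i v)
            + (B (e i) u * B (e j) v) • (J j (J i w) - J i (J j w))))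
      + (1/4 : ℝ) • (∑ i, ∑ j,
          ((B (e i) w * B (J j (J i u) - J i (J j u)) v
            + B (e i) v * B (J j u) (J i w) - B (e i) u * B (J j v) (J i w)) • e j))
      - (1/4 : ℝ) • ⁅w, ⁅u, v⁆⁆
      + (∑ j, ((-(1/2) * B w (e j)) • J j ⁅u, v⁆ + (1/4 * B (e j) u) • J j ⁅v, w⁆
            - (1/4 * B v (e j)) • J j ⁅u, w⁆))
      - (1/4 : ℝ) • (∑ j, (B ⁅v, e j⁆ w + B ⁅w, e j⁆ v) • J j u)
      + (1/4 : ℝ) • (∑ j, (B ⁅u, e j⁆ w + B ⁅w, e j⁆ u) • J j v) :=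
  statement3_general B hsymm hnd e x hspan hx J hJ nab hnab

end ArrowBreakingPaper
end

section
/- Let g be a finite-dimensional real nilpotent Lie algebra with a nice basis {e_1,…,e_n}, and let σ be an order-two permutation of the basis. Suppose there are indices s,t such that there is no index k satisfying both e_s →^{e_k} e_{σ(s)} and e_t →^{e_{σ(k)}} e_{σ(t)}. Assume that at least one of the following holds: (C1) there is an index k₁ fixed by σ with e_s →^{e_t} e_{k₁}, and there is no arrow of the form e_t →^{e_l} e_{σ(s)} for any l, and no arrow of the form e_s →^{e_l} e_{σ(t)} for any l; or (C2) there is an index k₂ fixed by σ with e_s →^{e_{k₂}} e_{σ(t)}, and [e_s,e_t] = 0, and there is no arrow of the form e_t →^{e_l} e_{σ(s)} for any l. Then every σ-diagonal metric on g is not flat. -/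
/-!
Suppose the Levi-Civita connection `∇` is flat and look at `⟨R(u,v)v,u⟩` for `u = e_s`, `v = e_t`.
As there is no arrow `e_t → e_{σ s}`, `ad e_t` maps into `e_s^⊥`, and the Koszul formula gives
`2⟨R(u,v)v,u⟩ = ⟨Z,Z⟩ + ⟨[u,Z],v⟩ + ⟨[u,Y],v⟩ + ⟨Z,Y⟩ - 2⟨[u,∇_v v],u⟩` with `Z = [u,v]`,
`Y = ∇_u v`. The last term vanishes: the `e_m`-coordinate of `∇_v v` is a multiple of the
`e_{σ t}`-coefficient of `[e_t, e_{σ m}]`, and by the hypothesis on `k` either that coefficient or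
the `e_{σ s}`-coefficient of `[e_s, e_m]` is zero.
In (C1) `ad e_s` also maps into `e_t^⊥`, so `Y = Z/2` and `4⟨R(u,v)v,u⟩ = 3⟨Z,Z⟩ = 3c²g_{k₁} ≠ 0`.
In (C2) `Z = 0`, niceness forces `Y` to be a nonzero multiple of `e_{k₂}`, and
`2⟨R(u,v)v,u⟩ = ⟨[u,Y],v⟩ ≠ 0`.
-/

open scoped BigOperators

namespace ArrowBreakingPaper

variable {ι : Type*} {g : Type*} [LieRing g] [LieAlgebra ℝ g]

section LeviCivita

variable {B : LinearMap.BilinForm ℝ g} {nab : g → g → g}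

theorem Nondeg.eq_of_forall_apply_eq (hnd : Nondeg B) {x y : g} (h : ∀ w, B x w = B y w) :
    x = y :=
  sub_eq_zero.1 <| hnd _ fun w => by rw [map_sub, LinearMap.sub_apply, h, sub_self]

namespace IsLeviCivita

theorem apply_nab_self (hnab : IsLeviCivita B nab) (u w : g) :
    B (nab u u) w = -B ⁅u, w⁆ u := by
  have h := hnab u u w
  rw [lie_self, ← lie_skew w u] at h
  simp only [map_zero, LinearMap.zero_apply, map_neg, LinearMap.neg_apply] at h
  linarith

theorem apply_nab_left (hnab : IsLeviCivita B nab) (u v : g) :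
    B (nab u v) u = B ⁅u, v⁆ u := by
  have h := hnab u v u
  rw [lie_self, ← lie_skew v u] at h
  simp only [map_zero, LinearMap.zero_apply, map_neg, LinearMap.neg_apply] at h
  linarith

theorem two_mul_apply_nab_of_apply_lie_eq_zero (hnab : IsLeviCivita B nab) {u v : g}
    (hvu : ∀ x, B ⁅v, x⁆ u = 0) (w : g) :
    2 * B (nab u v) w = B ⁅u, v⁆ w + B ⁅w, u⁆ v := by
  rw [hnab, hvu, sub_zero]

theorem two_mul_apply_curv (hnab : IsLeviCivita B nab) {u v : g}
    (hvu : ∀ x, B ⁅v, x⁆ u = 0) :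
    2 * B (curv nab u v v) u = B ⁅u, v⁆ ⁅u, v⁆ + B ⁅u, ⁅u, v⁆⁆ v
      + B ⁅u, nab u v⁆ v + B ⁅u, v⁆ (nab u v) - 2 * B ⁅u, nab v v⁆ u := by
  have h₁ := hnab ⁅u, v⁆ v u
  have h₂ := hnab v (nab u v) u
  rw [← lie_skew ⁅u, v⁆ v, ← lie_skew v u] at h₁
  rw [← lie_skew (nab u v) u] at h₂
  simp only [map_neg, LinearMap.neg_apply, hvu, neg_zero] at h₁ h₂
  simp only [curv, map_add, map_sub, LinearMap.add_apply, LinearMap.sub_apply,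
    hnab.apply_nab_left]
  linarith

theorem nab_eq_half_lie (hnab : IsLeviCivita B nab) (hnd : Nondeg B) {u v : g}
    (hvu : ∀ x, B ⁅v, x⁆ u = 0) (huv : ∀ x, B ⁅u, x⁆ v = 0) :
    nab u v = (1 / 2 : ℝ) • ⁅u, v⁆ := by
  refine hnd.eq_of_forall_apply_eq fun w => ?_
  have h := hnab.two_mul_apply_nab_of_apply_lie_eq_zero hvu w
  rw [← lie_skew w u, map_neg, LinearMap.neg_apply, huv] at h
  simp only [map_smul, LinearMap.smul_apply, smul_eq_mul]
  linarith

theorem four_mul_apply_curv (hnab : IsLeviCivita B nab) (hnd : Nondeg B) {u v : g}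
    (hvu : ∀ x, B ⁅v, x⁆ u = 0) (huv : ∀ x, B ⁅u, x⁆ v = 0) :
    4 * B (curv nab u v v) u = 3 * B ⁅u, v⁆ ⁅u, v⁆ - 4 * B ⁅u, nab v v⁆ u := by
  have h := hnab.two_mul_apply_curv hvu
  rw [hnab.nab_eq_half_lie hnd hvu huv] at h
  simp only [huv, map_smul, smul_eq_mul] at h
  linarith

end IsLeviCivita

end LeviCivita

section Basis

variable {e : Module.Basis ι ℝ g} {B : LinearMap.BilinForm ℝ g} {nab : g → g → g}
  {σ : Equiv.Perm ι} {gv : ι → ℝ}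

theorem Nondeg.eq_of_forall_apply_basis_eq (hnd : Nondeg B) {x y : g}
    (h : ∀ k, B x (e k) = B y (e k)) : x = y :=
  hnd.eq_of_forall_apply_eq fun w => LinearMap.congr_fun (e.ext h) w

theorem apply_basis_right [Fintype ι] [DecidableEq ι]
    (hB : ∀ i k, B (e i) (e k) = if i = σ k then gv i else 0)
    (x : g) (k : ι) : B x (e k) = e.repr x (σ k) * gv (σ k) := by
  conv_lhs => rw [← e.sum_repr x]
  simp only [map_sum, map_smul, LinearMap.sum_apply, LinearMap.smul_apply, smul_eq_mul, hB,
    mul_ite, mul_zero, Finset.sum_ite_eq', Finset.mem_univ, if_true]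

theorem IsNiceBasis.arrow_of_repr_ne_zero (hnice : IsNiceBasis e) {i j k : ι}
    (h : e.repr ⁅e i, e j⁆ k ≠ 0) : Arrow e i j k := by
  classical
  obtain ⟨k', c, hc⟩ := hnice.1 i j
  rw [hc, map_smul, e.repr_self, Finsupp.smul_apply, Finsupp.single_apply] at h
  split_ifs at h with hk
  · exact ⟨c, by simpa using h, hk ▸ hc⟩
  · simp at h

theorem IsNiceBasis.repr_lie_eq_zero [Fintype ι] (hnice : IsNiceBasis e) {i k : ι}
    (h : ∀ l, ¬ Arrow e i l k) (x : g) : e.repr ⁅e i, x⁆ k = 0 := by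
  rw [← e.sum_repr x, lie_sum]
  simp only [lie_smul, map_sum, map_smul, Finsupp.coe_finsetSum, Finset.sum_apply,
    Finsupp.smul_apply, smul_eq_mul]
  exact Finset.sum_eq_zero fun l _ => by
    rw [not_ne_iff.1 (mt hnice.arrow_of_repr_ne_zero (h l)), mul_zero]

theorem IsNiceBasis.repr_lie_eq_ite [DecidableEq ι] (hnice : IsNiceBasis e) {i j k : ι} {c : ℝ}
    (hc : c ≠ 0) (hij : ⁅e i, e j⁆ = c • e k) (l : ι) :
    e.repr ⁅e i, e l⁆ k = if l = j then c else 0 := by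
  have hj : e.repr ⁅e i, e j⁆ k = c := by simp [hij]
  split_ifs with hl
  · rw [hl, hj]
  · by_contra h
    exact hl (hnice.2 i k l j h (hj ▸ hc))

theorem apply_lie_eq_zero_of_forall_not_arrow [Fintype ι] [DecidableEq ι]
    (hnice : IsNiceBasis e) (hB : ∀ i k, B (e i) (e k) = if i = σ k then gv i else 0)
    {i k : ι} (h : ∀ l, ¬ Arrow e i l (σ k)) (x : g) : B ⁅e i, x⁆ (e k) = 0 := by
  rw [apply_basis_right hB, hnice.repr_lie_eq_zero h, zero_mul]

theorem apply_lie_nab_self_eq_zero [Fintype ι] [DecidableEq ι] (hnab : IsLeviCivita B nab)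
    (hnice : IsNiceBasis e) (hB : ∀ i k, B (e i) (e k) = if i = σ k then gv i else 0)
    (hσ : ∀ i, σ (σ i) = i) (hgv : ∀ i, gv i ≠ 0) {s t : ι}
    (hnok : ¬ ∃ k, Arrow e s k (σ s) ∧ Arrow e t (σ k) (σ t)) :
    B ⁅e s, nab (e t) (e t)⁆ (e s) = 0 := by
  set X := nab (e t) (e t)
  have hX : ∀ m, e.repr ⁅e t, e (σ m)⁆ (σ t) = 0 → e.repr X m = 0 := fun m hm => by
    have h := hnab.apply_nab_self (e t) (e (σ m))
    rw [apply_basis_right hB, apply_basis_right hB, hσ, hm, zero_mul, neg_zero] at h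
    exact (mul_eq_zero.1 h).resolve_right (hgv m)
  rw [apply_basis_right hB, ← e.sum_repr X, lie_sum]
  simp only [lie_smul, map_sum, map_smul, Finsupp.coe_finsetSum, Finset.sum_apply,
    Finsupp.smul_apply, smul_eq_mul]
  refine mul_eq_zero_of_left (Finset.sum_eq_zero fun m _ => ?_) _
  by_cases hs : e.repr ⁅e s, e m⁆ (σ s) = 0
  · rw [hs, mul_zero]
  by_cases ht : e.repr ⁅e t, e (σ m)⁆ (σ t) = 0
  · rw [hX m ht, zero_mul]
  exact absurd ⟨m, hnice.arrow_of_repr_ne_zero hs, hnice.arrow_of_repr_ne_zero ht⟩ hnok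

theorem apply_curv_ne_zero_of_lie_eq_smul_fixed [Fintype ι] [DecidableEq ι]
    (hnab : IsLeviCivita B nab) (hnd : Nondeg B)
    (hB : ∀ i k, B (e i) (e k) = if i = σ k then gv i else 0) (hgv : ∀ i, gv i ≠ 0)
    {s t k : ι} {c : ℝ} (hk : σ k = k) (hc : c ≠ 0) (hst : ⁅e s, e t⁆ = c • e k)
    (hts_perp : ∀ x, B ⁅e t, x⁆ (e s) = 0) (hst_perp : ∀ x, B ⁅e s, x⁆ (e t) = 0)
    (hX : B ⁅e s, nab (e t) (e t)⁆ (e s) = 0) :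
    B (curv nab (e s) (e t) (e t)) (e s) ≠ 0 := by
  have h := hnab.four_mul_apply_curv hnd hts_perp hst_perp
  simp only [hX, hst, map_smul, LinearMap.smul_apply, smul_eq_mul, hB, if_pos hk.symm] at h
  intro hR
  rw [hR] at h
  exact mul_ne_zero (mul_ne_zero hc hc) (hgv k) (by linarith)

theorem nab_eq_smul_of_lie_eq_zero [Fintype ι] [DecidableEq ι] (hnab : IsLeviCivita B nab)
    (hnd : Nondeg B) (hnice : IsNiceBasis e)
    (hB : ∀ i k, B (e i) (e k) = if i = σ k then gv i else 0) (hσ : ∀ i, σ (σ i) = i)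
    (hgv : ∀ i, gv i ≠ 0) {s t k : ι} {c : ℝ} (hk : σ k = k) (hc : c ≠ 0)
    (hst : ⁅e s, e t⁆ = 0) (hsk : ⁅e s, e k⁆ = c • e (σ t))
    (hts_perp : ∀ x, B ⁅e t, x⁆ (e s) = 0) :
    nab (e s) (e t) = (-(c * gv (σ t)) / (2 * gv k)) • e k := by
  refine hnd.eq_of_forall_apply_basis_eq (e := e) fun l => ?_
  have h := hnab.two_mul_apply_nab_of_apply_lie_eq_zero hts_perp (e l)
  rw [hst, ← lie_skew, map_neg, LinearMap.neg_apply, apply_basis_right hB ⁅e s, e l⁆ t,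
    hnice.repr_lie_eq_ite hc hsk] at h
  rw [map_smul, LinearMap.smul_apply, hB, smul_eq_mul]
  by_cases hl : l = k
  · subst hl
    rw [if_pos rfl] at h
    rw [if_pos hk.symm]
    field_simp [hgv l]
    simp only [map_zero, LinearMap.zero_apply] at h
    linarith
  · have hkl : k ≠ σ l := fun hkl => hl (by rw [← hk, hkl, hσ])
    rw [if_neg hl] at h
    rw [if_neg hkl]
    simp only [map_zero, LinearMap.zero_apply] at h
    linarith

theorem apply_curv_ne_zero_of_lie_eq_zero [Fintype ι] [DecidableEq ι]
    (hnab : IsLeviCivita B nab) (hnd : Nondeg B) (hnice : IsNiceBasis e)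
    (hB : ∀ i k, B (e i) (e k) = if i = σ k then gv i else 0) (hσ : ∀ i, σ (σ i) = i)
    (hgv : ∀ i, gv i ≠ 0) {s t k : ι} {c : ℝ} (hk : σ k = k) (hc : c ≠ 0)
    (hst : ⁅e s, e t⁆ = 0) (hsk : ⁅e s, e k⁆ = c • e (σ t))
    (hts_perp : ∀ x, B ⁅e t, x⁆ (e s) = 0) (hX : B ⁅e s, nab (e t) (e t)⁆ (e s) = 0) :
    B (curv nab (e s) (e t) (e t)) (e s) ≠ 0 := by
  have h := hnab.two_mul_apply_curv hts_perp
  rw [nab_eq_smul_of_lie_eq_zero hnab hnd hnice hB hσ hgv hk hc hst hsk hts_perp, hst, hX,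
    lie_smul, hsk] at h
  simp only [map_zero, LinearMap.zero_apply, lie_zero, map_smul, LinearMap.smul_apply, hB,
    if_true, smul_eq_mul] at h
  intro hR
  rw [hR] at h
  have hcg : c * gv (σ t) ≠ 0 := mul_ne_zero hc (hgv (σ t))
  exact mul_ne_zero (div_ne_zero (neg_ne_zero.2 hcg) (mul_ne_zero two_ne_zero (hgv k))) hcg
    (by linarith)

end Basis

theorem statement4_general {n : ℕ} {g : Type*} [LieRing g] [LieAlgebra ℝ g]
    (e : Module.Basis (Fin n) ℝ g) (hnice : IsNiceBasis e)
    (σ : Equiv.Perm (Fin n)) (hσ : ∀ i, σ (σ i) = i)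
    (s t : Fin n)
    (hnok : ¬ ∃ k, Arrow (⇑e) s k (σ s) ∧ Arrow (⇑e) t (σ k) (σ t))
    (hC : (∃ k₁, σ k₁ = k₁ ∧ Arrow (⇑e) s t k₁ ∧
            (∀ l, ¬ Arrow (⇑e) t l (σ s)) ∧ (∀ l, ¬ Arrow (⇑e) s l (σ t))) ∨
          (∃ k₂, σ k₂ = k₂ ∧ Arrow (⇑e) s k₂ (σ t) ∧ ⁅e s, e t⁆ = 0 ∧
            (∀ l, ¬ Arrow (⇑e) t l (σ s)))) :
    ∀ B : LinearMap.BilinForm ℝ g, IsSymm B → Nondeg B → IsSigmaDiagonal e σ B →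
      ¬ IsFlat B := by
  rintro B - hnd ⟨gv, hgv, -, hBσ⟩ ⟨nab, hnab, hflat⟩
  have hB : ∀ i k, B (e i) (e k) = if i = σ k then gv i else 0 := fun i k => by
    simpa only [hσ] using hBσ i (σ k)
  have hR : B (curv nab (e s) (e t) (e t)) (e s) = 0 := by
    rw [hflat, map_zero, LinearMap.zero_apply]
  have hX := apply_lie_nab_self_eq_zero hnab hnice hB hσ hgv hnok
  rcases hC with ⟨k, hk, ⟨c, hc, hst⟩, hts_arrow, hst_arrow⟩ |
    ⟨k, hk, ⟨c, hc, hsk⟩, hst, hts_arrow⟩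
  · exact apply_curv_ne_zero_of_lie_eq_smul_fixed hnab hnd hB hgv hk hc hst
      (apply_lie_eq_zero_of_forall_not_arrow hnice hB hts_arrow)
      (apply_lie_eq_zero_of_forall_not_arrow hnice hB hst_arrow) hX hR
  · exact apply_curv_ne_zero_of_lie_eq_zero hnab hnd hnice hB hσ hgv hk hc hst hsk
      (apply_lie_eq_zero_of_forall_not_arrow hnice hB hts_arrow) hX hR

/-- Non-flatness criteria for `σ`-diagonal metrics on nice nilpotent Lie
algebras. -/
theorem statement4 {n : ℕ} {g : Type*} [LieRing g] [LieAlgebra ℝ g]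
    [LieRing.IsNilpotent g]
    (e : Module.Basis (Fin n) ℝ g) (hnice : IsNiceBasis e)
    (σ : Equiv.Perm (Fin n)) (hσ : ∀ i, σ (σ i) = i)
    (s t : Fin n)
    (hnok : ¬ ∃ k, Arrow (⇑e) s k (σ s) ∧ Arrow (⇑e) t (σ k) (σ t))
    (hC : (∃ k₁, σ k₁ = k₁ ∧ Arrow (⇑e) s t k₁ ∧
            (∀ l, ¬ Arrow (⇑e) t l (σ s)) ∧ (∀ l, ¬ Arrow (⇑e) s l (σ t))) ∨
          (∃ k₂, σ k₂ = k₂ ∧ Arrow (⇑e) s k₂ (σ t) ∧ ⁅e s, e t⁆ = 0 ∧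
            (∀ l, ¬ Arrow (⇑e) t l (σ s)))) :
    ∀ B : LinearMap.BilinForm ℝ g, IsSymm B → Nondeg B → IsSigmaDiagonal e σ B →
      ¬ IsFlat B :=
  statement4_general e hnice σ hσ s t hnok hC

end ArrowBreakingPaper
end

section
/- Let g be a finite-dimensional real nilpotent Lie algebra with a nice basis {e_1,…,e_n}. In the polynomial ring ℤ[X_1,…,X_n], define P = Π (X_i + X_j), the product over all pairs i < j such that e_i →^{e_j} e_k for some k, and Q = Π (1 + X_i − X_k), the product over all triples (i,j,k) such that e_i →^{e_j} e_k; a permutation σ of {1,…,n} acts on ℤ[X_1,…,X_n] by permuting the variables. Then for an order-two permutation σ of the basis, the following are equivalent: (1) σ is an arrow-breaking involution; (2) P and σ·P have no common divisor of degree one, and Q and σ·Q have no common divisor of degree one; (3) neither P nor Q has a σ-invariant divisor of positive degree. -/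
/-!
Every factor of `P` and `Q` is a prime of `ℤ[X]` of degree one: `Xᵢ + Xⱼ` with `i ≠ j`, and
`1 + Xᵢ - Xₖ` with `i ≠ k`. The latter is where nilpotency enters: an arrow `eᵢ →^{eⱼ} eᵢ` would
make `eᵢ` an eigenvector of `ad eⱼ` with a nonzero eigenvalue. Each of these primes has the form
`X_w - q` with `X_w` not occurring in `q`, so divisibility by it is tested by substituting `q`
for `X_w`; in particular one such linear form divides another only if the two agree (up to
order, for `Xᵢ + Xⱼ`).

Hence a common linear divisor of `P` and `σP` is a factor `Xᵢ + Xⱼ` of `P` that is also the image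
`σ(Xₐ + X_b)` of one, i.e. an arrow with source and label `eᵢ, eⱼ` together with one with source
and label `σeᵢ, σeⱼ`: a violation of condition (2). Likewise a common linear divisor of `Q` and
`σQ` is a violation of condition (1). A `σ`-invariant divisor of positive degree contains such a
common prime factor, and conversely a prime `p` with `p` and `σp` dividing the polynomial yields
the invariant divisor `p` or `p · σp`.
-/

open scoped BigOperators

namespace ArrowBreakingPaper

variable {ι : Type*} {g : Type*} [LieRing g] [LieAlgebra ℝ g]

open Classical in
/-- The polynomial `P_Δ = ∏_{i →^j k, i < j} (Xᵢ + Xⱼ)`. -/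
noncomputable def Ppoly {g : Type*} [LieRing g] [LieAlgebra ℝ g] {n : ℕ}
    (e : Fin n → g) : MvPolynomial (Fin n) ℤ :=
  ∏ p : Fin n × Fin n,
    if p.1 < p.2 ∧ ∃ k, Arrow e p.1 p.2 k
    then MvPolynomial.X p.1 + MvPolynomial.X p.2 else 1

open Classical in
/-- The polynomial `Q_Δ = ∏_{i →^j k} (1 + Xᵢ − X_k)`. -/
noncomputable def Qpoly {g : Type*} [LieRing g] [LieAlgebra ℝ g] {n : ℕ}
    (e : Fin n → g) : MvPolynomial (Fin n) ℤ :=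
  ∏ t : Fin n × Fin n × Fin n,
    if Arrow e t.1 t.2.1 t.2.2
    then 1 + MvPolynomial.X t.1 - MvPolynomial.X t.2.2 else 1

theorem exists_dvd_of_dvd_prod_of_prime {M : Type*} [CommMonoidWithZero M] [IsCancelMulZero M]
    {s : Finset ι} {F : ι → M} (hF : ∀ i ∈ s, Prime (F i)) {f : M} (hf : ¬IsUnit f)
    (hdvd : f ∣ ∏ i ∈ s, F i) : ∃ i ∈ s, F i ∣ f := by
  classical
  induction s using Finset.induction_on with
  | empty => exact absurd (isUnit_of_dvd_one (by simpa using hdvd)) hf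
  | insert a s ha ih =>
    rw [Finset.prod_insert ha] at hdvd
    rcases (hF a (Finset.mem_insert_self a s)).left_dvd_or_dvd_right_of_dvd_mul hdvd with h | h
    · exact ⟨a, Finset.mem_insert_self a s, h⟩
    · obtain ⟨i, hi, hif⟩ := ih (fun i hi => hF i (Finset.mem_insert_of_mem hi)) h
      exact ⟨i, Finset.mem_insert_of_mem hi, hif⟩

section Polynomial

open MvPolynomial

variable {R : Type*} [CommSemiring R]

theorem _root_.Prime.dvd_of_dvd_of_totalDegree_le [NoZeroDivisors R]
    {p q f : MvPolynomial ι R} (hq : Prime q) (hq0 : 0 < q.totalDegree) (hf : f ≠ 0)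
    (hpf : p ∣ f)
    (hdeg : f.totalDegree ≤ p.totalDegree) (hqf : q ∣ f) : q ∣ p := by
  obtain ⟨u, rfl⟩ := hpf
  have hu : u ≠ 0 := right_ne_zero_of_mul hf
  rw [totalDegree_mul_of_isDomain (left_ne_zero_of_mul hf) hu] at hdeg
  refine (hq.dvd_or_dvd hqf).resolve_right fun hqu => ?_
  have := totalDegree_le_of_dvd_of_isDomain hqu hu
  omega

theorem rename_rename_of_involutive {σ : ι → ι} (hσ : Function.Involutive σ)
    (f : MvPolynomial ι R) : rename σ (rename σ f) = f := by
  rw [rename_rename, hσ.comp_self, rename_id_apply]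

theorem dvd_rename_iff_of_involutive {σ : ι → ι} (hσ : Function.Involutive σ)
    {f A : MvPolynomial ι R} : f ∣ rename σ A ↔ rename σ f ∣ A := by
  constructor <;> intro h <;>
    simpa only [rename_rename_of_involutive hσ] using map_dvd (rename σ) h

end Polynomial

section LinearPolynomial

open MvPolynomial

variable {R : Type*} [CommRing R] {a b c i j k : ι}

theorem X_sub_dvd_iff_aeval_update [DecidableEq ι] {w : ι} {q : MvPolynomial ι R}
    (hq : w ∉ q.vars) (f : MvPolynomial ι R) :
    X w - q ∣ f ↔ aeval (Function.update X w q) f = 0 := by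
  set I := Ideal.span {X w - q}
  have hmod : (Ideal.Quotient.mkₐ R I).comp (aeval (Function.update X w q)) =
      Ideal.Quotient.mkₐ R I := by
    refine MvPolynomial.algHom_ext fun i => ?_
    rw [AlgHom.comp_apply, aeval_X, Ideal.Quotient.mkₐ_eq_mk, Ideal.Quotient.mk_eq_mk_iff_sub_mem]
    rcases eq_or_ne i w with rfl | hi
    · rw [Function.update_self, ← neg_sub]
      exact I.neg_mem (Ideal.mem_span_singleton_self _)
    · simp [hi]
  have hfix : aeval (Function.update X w q) q = q := by
    calc aeval (Function.update X w q) q = aeval X q := by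
          simp only [aeval_eq_eval₂Hom]
          exact eval₂Hom_congr' rfl
            (fun i hi _ => Function.update_of_ne (by rintro rfl; exact hq hi) _ _) rfl
      _ = q := by rw [aeval_X_left, AlgHom.id_apply]
  constructor
  · rintro ⟨u, rfl⟩
    rw [map_mul, map_sub, aeval_X, Function.update_self, hfix, sub_self, zero_mul]
  · intro h
    have := AlgHom.congr_fun hmod f
    rw [AlgHom.comp_apply, h, map_zero, eq_comm, Ideal.Quotient.mkₐ_eq_mk,
      Ideal.Quotient.eq_zero_iff_mem] at this
    exact Ideal.mem_span_singleton.mp this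

theorem prime_X_sub [IsDomain R] {w : ι} {q : MvPolynomial ι R} (hq : w ∉ q.vars) :
    Prime (X w - q) := by
  classical
  have hker : Ideal.span {X w - q} = RingHom.ker (aeval (R := R) (Function.update X w q)) := by
    ext f
    rw [Ideal.mem_span_singleton, X_sub_dvd_iff_aeval_update hq, RingHom.mem_ker]
  have hne : X w - q ≠ 0 := by
    intro h
    rw [sub_eq_zero] at h
    exact hq (h ▸ by simp [vars_X])
  rw [← Ideal.span_singleton_prime hne, hker]
  exact RingHom.ker_isPrime _

theorem totalDegree_X_sub [Nontrivial R] {w : ι} {q : MvPolynomial ι R} (hq : w ∉ q.vars)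
    (hq1 : q.totalDegree ≤ 1) : (X w - q).totalDegree = 1 := by
  classical
  refine le_antisymm ((totalDegree_sub _ _).trans (by simpa [totalDegree_X] using hq1)) ?_
  by_contra! h
  rw [Nat.lt_one_iff, totalDegree_eq_zero_iff_eq_C] at h
  have hw : w ∈ (X w - q).vars := by
    rw [vars_sub_of_disjoint (p := X w) (by rwa [vars_X, Finset.disjoint_singleton_left]), vars_X]
    exact Finset.mem_union_left _ (Finset.mem_singleton_self w)
  rw [h, vars_C] at hw
  exact Finset.notMem_empty w hw

theorem not_isUnit_of_totalDegree_pos [IsReduced R] {f : MvPolynomial ι R}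
    (hf : 0 < f.totalDegree) : ¬IsUnit f := fun hu => by
  have := (isUnit_iff_totalDegree_of_isReduced.mp hu).2
  omega

/-- The invariant divisor is `p` itself, or else `p * σ p`. -/
theorem exists_rename_eq_self_dvd [IsDomain R] {σ : ι → ι} (hσ : Function.Involutive σ)
    {p A : MvPolynomial ι R} (hp : Prime p) (hp0 : 0 < p.totalDegree) (hpA : p ∣ A)
    (hσpA : rename σ p ∣ A) (hfix : rename σ p ∣ p → rename σ p = p) :
    ∃ f : MvPolynomial ι R, 0 < f.totalDegree ∧ f ∣ A ∧ rename σ f = f := by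
  by_cases hdvd : rename σ p ∣ p
  · exact ⟨p, hp0, hpA, hfix hdvd⟩
  refine ⟨p * rename σ p, ?_, ?_, ?_⟩
  · have hσp : rename σ p ≠ 0 := fun h =>
      hp.ne_zero (by rw [← rename_rename_of_involutive hσ p, h, map_zero])
    rw [totalDegree_mul_of_isDomain hp.ne_zero hσp]
    omega
  · obtain ⟨M, rfl⟩ := hpA
    refine mul_dvd_mul_left p ((hp.left_dvd_or_dvd_right_of_dvd_mul hσpA).resolve_left ?_)
    rwa [dvd_rename_iff_of_involutive hσ]
  · rw [map_mul, rename_rename_of_involutive hσ, mul_comm]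

theorem X_add_X_dvd_X_add_X [Nontrivial R] (hab : a ≠ b) (hij : i ≠ j)
    (h : (X a + X b : MvPolynomial ι R) ∣ X i + X j) : (a = i ∧ b = j) ∨ (a = j ∧ b = i) := by
  classical
  rw [← sub_neg_eq_add (X a), X_sub_dvd_iff_aeval_update (by simpa [vars_X] using hab)] at h
  simp only [map_add, aeval_X, Function.update_apply] at h
  split_ifs at h with hia hja hja
  · exact absurd (hia.trans hja.symm) hij
  · exact Or.inl ⟨hia.symm, X_injective (neg_add_eq_zero.mp h)⟩
  · exact Or.inr ⟨hja.symm, X_injective (add_neg_eq_zero.mp h).symm⟩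
  · have := congrArg (coeff (Finsupp.single i 1)) h
    simp [coeff_X, Finsupp.single_left_inj, Ne.symm hij] at this

theorem notMem_vars_one_add_X [Nontrivial R] (hac : a ≠ c) :
    c ∉ (1 + X a : MvPolynomial ι R).vars := by
  classical
  intro hc
  simpa [vars_X, Ne.symm hac] using vars_add_subset (1 : MvPolynomial ι R) (X a) hc

theorem one_add_X_sub_X_dvd_one_add_X_sub_X [CharZero R] (hac : a ≠ c) (hik : i ≠ k)
    (h : (1 + X a - X c : MvPolynomial ι R) ∣ 1 + X i - X k) : a = i ∧ c = k := by
  classical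
  rw [← neg_sub, neg_dvd, X_sub_dvd_iff_aeval_update (notMem_vars_one_add_X hac)] at h
  simp only [map_sub, map_add, map_one, aeval_X, Function.update_apply] at h
  split_ifs at h with hic hkc hkc
  · exact absurd (hic.trans hkc.symm) hik
  · have h0 := congrArg constantCoeff h
    norm_num at h0
  · exact ⟨X_injective (by linear_combination -h), hkc.symm⟩
  · simpa using congrArg constantCoeff h

theorem prime_X_add_X [IsDomain R] (hab : a ≠ b) : Prime (X a + X b : MvPolynomial ι R) := by
  rw [← sub_neg_eq_add]
  exact prime_X_sub (by simpa [vars_X] using hab)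

theorem totalDegree_X_add_X [Nontrivial R] (hab : a ≠ b) :
    (X a + X b : MvPolynomial ι R).totalDegree = 1 := by
  rw [← sub_neg_eq_add]
  exact totalDegree_X_sub (by simpa [vars_X] using hab) (by simp [totalDegree_X])

theorem prime_one_add_X_sub_X [IsDomain R] (hac : a ≠ c) :
    Prime (1 + X a - X c : MvPolynomial ι R) := by
  rw [← neg_sub]
  exact (prime_X_sub (notMem_vars_one_add_X hac)).neg

theorem totalDegree_one_add_X_sub_X [Nontrivial R] (hac : a ≠ c) :
    (1 + X a - X c : MvPolynomial ι R).totalDegree = 1 := by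
  rw [← neg_sub, totalDegree_neg]
  refine totalDegree_X_sub (notMem_vars_one_add_X hac) ((totalDegree_add _ _).trans ?_)
  simp [totalDegree_X]

end LinearPolynomial

theorem eq_zero_of_lie_eq_smul {K L : Type*} [Field K] [LieRing L] [LieAlgebra K L]
    [LieRing.IsNilpotent L] {x v : L} {c : K} (hv : v ≠ 0) (h : ⁅x, v⁆ = c • v) : c = 0 := by
  have hc : (LieModule.toEnd K L L x).HasEigenvalue c :=
    Module.End.hasEigenvalue_of_hasEigenvector ⟨Module.End.mem_eigenspace_iff.mpr h, hv⟩
  exact (hc.isNilpotent_of_isNilpotent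
    (LieModule.isNilpotent_toEnd_of_isNilpotent K L L x)).eq_zero

section Arrow

variable {i j k : ι}

theorem Arrow.symm {e : ι → g} (h : Arrow e i j k) : Arrow e j i k := by
  obtain ⟨c, hc, h⟩ := h
  exact ⟨-c, neg_ne_zero.mpr hc, by rw [← lie_skew, h, neg_smul]⟩

theorem Arrow.ne {e : Module.Basis ι ℝ g} (h : Arrow e i j k) : i ≠ j := by
  rintro rfl
  obtain ⟨c, hc, h⟩ := h
  rw [lie_self, eq_comm, smul_eq_zero] at h
  exact h.elim hc (e.ne_zero k)

theorem Arrow.ne_right [LieRing.IsNilpotent g] {e : Module.Basis ι ℝ g} (h : Arrow e i j k) :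
    j ≠ k := by
  rintro rfl
  obtain ⟨c, hc, h⟩ := h
  exact hc (eq_zero_of_lie_eq_smul (e.ne_zero j) h)

theorem Arrow.ne_left [LieRing.IsNilpotent g] {e : Module.Basis ι ℝ g} (h : Arrow e i j k) :
    i ≠ k :=
  h.symm.ne_right

end Arrow

section ArrowPolynomials

open MvPolynomial

variable {n : ℕ} {i j k : Fin n}

open Classical in
theorem Ppoly_eq_prod (e : Fin n → g) :
    Ppoly e = ∏ p ∈ {p : Fin n × Fin n | p.1 < p.2 ∧ ∃ k, Arrow e p.1 p.2 k},
      (X p.1 + X p.2 : MvPolynomial (Fin n) ℤ) := by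
  rw [Ppoly, Finset.prod_filter]

open Classical in
theorem Qpoly_eq_prod (e : Fin n → g) :
    Qpoly e = ∏ t ∈ {t : Fin n × Fin n × Fin n | Arrow e t.1 t.2.1 t.2.2},
      (1 + X t.1 - X t.2.2 : MvPolynomial (Fin n) ℤ) := by
  rw [Qpoly, Finset.prod_filter]

open Classical in
theorem X_add_X_dvd_Ppoly_of_lt {e : Fin n → g} (hij : i < j) (h : Arrow e i j k) :
    (X i + X j : MvPolynomial (Fin n) ℤ) ∣ Ppoly e := by
  have hmem : (i, j) ∈ ({p : Fin n × Fin n | p.1 < p.2 ∧ ∃ k, Arrow e p.1 p.2 k} : Finset _) := by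
    simpa using ⟨hij, k, h⟩
  rw [Ppoly_eq_prod]
  exact (Finset.dvd_prod_of_mem (fun p : Fin n × Fin n => (X p.1 + X p.2 : MvPolynomial (Fin n) ℤ))
    hmem :)

theorem X_add_X_dvd_Ppoly {e : Module.Basis (Fin n) ℝ g} (h : Arrow e i j k) :
    (X i + X j : MvPolynomial (Fin n) ℤ) ∣ Ppoly e := by
  rcases h.ne.lt_or_gt with hij | hji
  · exact X_add_X_dvd_Ppoly_of_lt hij h
  · rw [add_comm]
    exact X_add_X_dvd_Ppoly_of_lt hji h.symm

open Classical in
theorem one_add_X_sub_X_dvd_Qpoly {e : Fin n → g} (h : Arrow e i j k) :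
    (1 + X i - X k : MvPolynomial (Fin n) ℤ) ∣ Qpoly e := by
  have hmem : (i, j, k) ∈ ({t : Fin n × Fin n × Fin n | Arrow e t.1 t.2.1 t.2.2} : Finset _) := by
    simpa using h
  rw [Qpoly_eq_prod]
  exact (Finset.dvd_prod_of_mem
    (fun t : Fin n × Fin n × Fin n => (1 + X t.1 - X t.2.2 : MvPolynomial (Fin n) ℤ)) hmem :)

open Classical in
theorem exists_X_add_X_dvd_of_dvd_Ppoly {e : Module.Basis (Fin n) ℝ g}
    {f : MvPolynomial (Fin n) ℤ} (hf : ¬IsUnit f) (hdvd : f ∣ Ppoly e) :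
    ∃ i j k, Arrow e i j k ∧ X i + X j ∣ f := by
  rw [Ppoly_eq_prod] at hdvd
  obtain ⟨p, hp, hpf⟩ := exists_dvd_of_dvd_prod_of_prime
    (fun p hp => prime_X_add_X (Finset.mem_filter.mp hp).2.1.ne) hf hdvd
  obtain ⟨-, k, hk⟩ := (Finset.mem_filter.mp hp).2
  exact ⟨p.1, p.2, k, hk, hpf⟩

open Classical in
theorem exists_one_add_X_sub_X_dvd_of_dvd_Qpoly [LieRing.IsNilpotent g]
    {e : Module.Basis (Fin n) ℝ g} {f : MvPolynomial (Fin n) ℤ} (hf : ¬IsUnit f)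
    (hdvd : f ∣ Qpoly e) : ∃ i j k, Arrow e i j k ∧ 1 + X i - X k ∣ f := by
  rw [Qpoly_eq_prod] at hdvd
  obtain ⟨t, ht, htf⟩ := exists_dvd_of_dvd_prod_of_prime
    (fun t ht => prime_one_add_X_sub_X (Finset.mem_filter.mp ht).2.ne_left) hf hdvd
  exact ⟨t.1, t.2.1, t.2.2, (Finset.mem_filter.mp ht).2, htf⟩

end ArrowPolynomials

theorem isArrowBreaking_iff {e : ι → g} {σ : Equiv.Perm ι} (hσ : Function.Involutive σ) :
    IsArrowBreaking e σ ↔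
      (¬∃ i j k m, Arrow e i j k ∧ Arrow e (σ i) (σ j) m) ∧
        ¬∃ i j k l, Arrow e i j k ∧ Arrow e l (σ j) (σ k) := by
  simp only [IsArrowBreaking, not_exists, not_and]
  exact ⟨fun ⟨_, hQ, hP⟩ => ⟨fun i j k m h => hP i j k h m, fun i j k l h => hQ i j k h l⟩,
    fun ⟨hP, hQ⟩ => ⟨hσ, fun i j k h l => hQ i j k l h, fun i j k h m => hP i j k m h⟩⟩

section Criteria

open MvPolynomial

variable {n : ℕ} {e : Module.Basis (Fin n) ℝ g} {σ : Equiv.Perm (Fin n)}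

theorem exists_linear_common_dvd_Ppoly_iff (hσ : Function.Involutive σ) :
    (∃ f : MvPolynomial (Fin n) ℤ, f.totalDegree = 1 ∧ f ∣ Ppoly e ∧ f ∣ rename σ (Ppoly e)) ↔
      ∃ i j k m, Arrow e i j k ∧ Arrow e (σ i) (σ j) m := by
  constructor
  · rintro ⟨f, hdeg, hfP, hfσP⟩
    have hf : ¬IsUnit f := not_isUnit_of_totalDegree_pos (by omega)
    have hσf : ¬IsUnit (rename σ f) := fun hu =>
      hf (rename_rename_of_involutive hσ f ▸ hu.map (rename σ))
    obtain ⟨i, j, k, hijk, hij⟩ := exists_X_add_X_dvd_of_dvd_Ppoly hf hfP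
    obtain ⟨a, b, c, habc, hab⟩ :=
      exists_X_add_X_dvd_of_dvd_Ppoly hσf ((dvd_rename_iff_of_involutive hσ).mp hfσP)
    have hσab : X (σ a) + X (σ b) ∣ f := by
      simpa [rename_rename_of_involutive hσ] using map_dvd (rename σ) hab
    have hσa_ne : σ a ≠ σ b := σ.injective.ne habc.ne
    have hdvd := (prime_X_add_X (R := ℤ) hσa_ne).dvd_of_dvd_of_totalDegree_le
      (by rw [totalDegree_X_add_X hσa_ne]; omega) (by rintro rfl; simp at hdeg) hij
      (by rw [hdeg, totalDegree_X_add_X hijk.ne]) hσab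
    rcases X_add_X_dvd_X_add_X hσa_ne hijk.ne hdvd with ⟨rfl, rfl⟩ | ⟨rfl, rfl⟩
    · exact ⟨a, b, c, k, habc, hijk⟩
    · exact ⟨a, b, c, k, habc, hijk.symm⟩
  · rintro ⟨i, j, k, m, hijk, hσijm⟩
    refine ⟨X i + X j, totalDegree_X_add_X hijk.ne, X_add_X_dvd_Ppoly hijk, ?_⟩
    rw [dvd_rename_iff_of_involutive hσ]
    simpa using X_add_X_dvd_Ppoly hσijm

theorem exists_linear_common_dvd_Qpoly_iff [LieRing.IsNilpotent g]
    (hσ : Function.Involutive σ) :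
    (∃ f : MvPolynomial (Fin n) ℤ, f.totalDegree = 1 ∧ f ∣ Qpoly e ∧ f ∣ rename σ (Qpoly e)) ↔
      ∃ i j k l, Arrow e i j k ∧ Arrow e l (σ j) (σ k) := by
  constructor
  · rintro ⟨f, hdeg, hfQ, hfσQ⟩
    have hf : ¬IsUnit f := not_isUnit_of_totalDegree_pos (by omega)
    have hσf : ¬IsUnit (rename σ f) := fun hu =>
      hf (rename_rename_of_involutive hσ f ▸ hu.map (rename σ))
    obtain ⟨i, j, k, hijk, hik⟩ := exists_one_add_X_sub_X_dvd_of_dvd_Qpoly hf hfQ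
    obtain ⟨a, b, c, habc, hac⟩ :=
      exists_one_add_X_sub_X_dvd_of_dvd_Qpoly hσf ((dvd_rename_iff_of_involutive hσ).mp hfσQ)
    have hσac : 1 + X (σ a) - X (σ c) ∣ f := by
      simpa [rename_rename_of_involutive hσ] using map_dvd (rename σ) hac
    have hσa_ne : σ a ≠ σ c := σ.injective.ne habc.ne_left
    have hdvd := (prime_one_add_X_sub_X (R := ℤ) hσa_ne).dvd_of_dvd_of_totalDegree_le
      (by rw [totalDegree_one_add_X_sub_X hσa_ne]; omega) (by rintro rfl; simp at hdeg) hik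
      (by rw [hdeg, totalDegree_one_add_X_sub_X hijk.ne_left]) hσac
    obtain ⟨rfl, rfl⟩ := one_add_X_sub_X_dvd_one_add_X_sub_X hσa_ne hijk.ne_left hdvd
    exact ⟨j, σ a, σ c, b, hijk.symm, by rw [hσ a, hσ c]; exact habc.symm⟩
  · rintro ⟨i, j, k, l, hijk, hlσjk⟩
    refine ⟨1 + X j - X k, totalDegree_one_add_X_sub_X hijk.ne_right,
      one_add_X_sub_X_dvd_Qpoly hijk.symm, ?_⟩
    rw [dvd_rename_iff_of_involutive hσ]
    simpa using one_add_X_sub_X_dvd_Qpoly hlσjk.symm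

theorem exists_rename_invariant_dvd_Ppoly_iff (hσ : Function.Involutive σ) :
    (∃ f : MvPolynomial (Fin n) ℤ, 0 < f.totalDegree ∧ f ∣ Ppoly e ∧ rename σ f = f) ↔
      ∃ i j k m, Arrow e i j k ∧ Arrow e (σ i) (σ j) m := by
  constructor
  · rintro ⟨f, hf, hfP, hσf⟩
    obtain ⟨i, j, k, hijk, hij⟩ :=
      exists_X_add_X_dvd_of_dvd_Ppoly (not_isUnit_of_totalDegree_pos hf) hfP
    refine (exists_linear_common_dvd_Ppoly_iff hσ).mp
      ⟨X i + X j, totalDegree_X_add_X hijk.ne, hij.trans hfP, hij.trans ?_⟩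
    simpa [hσf] using map_dvd (rename σ) hfP
  · rintro ⟨i, j, k, m, hijk, hσijm⟩
    refine exists_rename_eq_self_dvd hσ (prime_X_add_X hijk.ne)
      (by rw [totalDegree_X_add_X hijk.ne]; omega) (X_add_X_dvd_Ppoly hijk)
      (by simpa using X_add_X_dvd_Ppoly hσijm) fun hdvd => ?_
    simp only [map_add, rename_X] at hdvd ⊢
    rcases X_add_X_dvd_X_add_X (σ.injective.ne hijk.ne) hijk.ne hdvd with ⟨hi, hj⟩ | ⟨hi, hj⟩
    · rw [hi, hj]
    · rw [hi, hj, add_comm]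

theorem exists_rename_invariant_dvd_Qpoly_iff [LieRing.IsNilpotent g]
    (hσ : Function.Involutive σ) :
    (∃ f : MvPolynomial (Fin n) ℤ, 0 < f.totalDegree ∧ f ∣ Qpoly e ∧ rename σ f = f) ↔
      ∃ i j k l, Arrow e i j k ∧ Arrow e l (σ j) (σ k) := by
  constructor
  · rintro ⟨f, hf, hfQ, hσf⟩
    obtain ⟨i, j, k, hijk, hik⟩ :=
      exists_one_add_X_sub_X_dvd_of_dvd_Qpoly (not_isUnit_of_totalDegree_pos hf) hfQ
    refine (exists_linear_common_dvd_Qpoly_iff hσ).mp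
      ⟨1 + X i - X k, totalDegree_one_add_X_sub_X hijk.ne_left, hik.trans hfQ, hik.trans ?_⟩
    simpa [hσf] using map_dvd (rename σ) hfQ
  · rintro ⟨i, j, k, l, hijk, hlσjk⟩
    refine exists_rename_eq_self_dvd hσ (prime_one_add_X_sub_X hijk.ne_right)
      (by rw [totalDegree_one_add_X_sub_X hijk.ne_right]; omega)
      (one_add_X_sub_X_dvd_Qpoly hijk.symm) (by simpa using one_add_X_sub_X_dvd_Qpoly hlσjk.symm)
      fun hdvd => ?_
    simp only [map_sub, map_add, map_one, rename_X] at hdvd ⊢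
    obtain ⟨hj, hk⟩ := one_add_X_sub_X_dvd_one_add_X_sub_X
      (σ.injective.ne hijk.ne_right) hijk.ne_right hdvd
    rw [hj, hk]

end Criteria

theorem statement5_general {n : ℕ} {g : Type*} [LieRing g] [LieAlgebra ℝ g]
    [LieRing.IsNilpotent g]
    (e : Module.Basis (Fin n) ℝ g)
    (σ : Equiv.Perm (Fin n)) (hσ : ∀ i, σ (σ i) = i) :
    (IsArrowBreaking (⇑e) σ ↔
      ((¬ ∃ f : MvPolynomial (Fin n) ℤ, f.totalDegree = 1 ∧
          f ∣ Ppoly (⇑e) ∧ f ∣ MvPolynomial.rename (⇑σ) (Ppoly (⇑e))) ∧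
       (¬ ∃ f : MvPolynomial (Fin n) ℤ, f.totalDegree = 1 ∧
          f ∣ Qpoly (⇑e) ∧ f ∣ MvPolynomial.rename (⇑σ) (Qpoly (⇑e))))) ∧
    (((¬ ∃ f : MvPolynomial (Fin n) ℤ, f.totalDegree = 1 ∧
          f ∣ Ppoly (⇑e) ∧ f ∣ MvPolynomial.rename (⇑σ) (Ppoly (⇑e))) ∧
      (¬ ∃ f : MvPolynomial (Fin n) ℤ, f.totalDegree = 1 ∧
          f ∣ Qpoly (⇑e) ∧ f ∣ MvPolynomial.rename (⇑σ) (Qpoly (⇑e)))) ↔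
     ((¬ ∃ f : MvPolynomial (Fin n) ℤ, 0 < f.totalDegree ∧
          f ∣ Ppoly (⇑e) ∧ MvPolynomial.rename (⇑σ) f = f) ∧
      (¬ ∃ f : MvPolynomial (Fin n) ℤ, 0 < f.totalDegree ∧
          f ∣ Qpoly (⇑e) ∧ MvPolynomial.rename (⇑σ) f = f))) := by
  rw [isArrowBreaking_iff hσ, exists_linear_common_dvd_Ppoly_iff hσ,
    exists_linear_common_dvd_Qpoly_iff hσ, exists_rename_invariant_dvd_Ppoly_iff hσ,
    exists_rename_invariant_dvd_Qpoly_iff hσ]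
  exact ⟨Iff.rfl, Iff.rfl⟩

/-- For an order-two permutation `σ` of a nice basis, being arrow-breaking is
equivalent to `P, σP` (resp. `Q, σQ`) having no common linear divisor, which is in turn
equivalent to `P` and `Q` having no `σ`-invariant divisor of positive degree. -/
theorem statement5 {n : ℕ} {g : Type*} [LieRing g] [LieAlgebra ℝ g]
    [LieRing.IsNilpotent g]
    (e : Module.Basis (Fin n) ℝ g) (hnice : IsNiceBasis e)
    (σ : Equiv.Perm (Fin n)) (hσ : ∀ i, σ (σ i) = i) :
    (IsArrowBreaking (⇑e) σ ↔
      ((¬ ∃ f : MvPolynomial (Fin n) ℤ, f.totalDegree = 1 ∧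
          f ∣ Ppoly (⇑e) ∧ f ∣ MvPolynomial.rename (⇑σ) (Ppoly (⇑e))) ∧
       (¬ ∃ f : MvPolynomial (Fin n) ℤ, f.totalDegree = 1 ∧
          f ∣ Qpoly (⇑e) ∧ f ∣ MvPolynomial.rename (⇑σ) (Qpoly (⇑e))))) ∧
    (((¬ ∃ f : MvPolynomial (Fin n) ℤ, f.totalDegree = 1 ∧
          f ∣ Ppoly (⇑e) ∧ f ∣ MvPolynomial.rename (⇑σ) (Ppoly (⇑e))) ∧
      (¬ ∃ f : MvPolynomial (Fin n) ℤ, f.totalDegree = 1 ∧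
          f ∣ Qpoly (⇑e) ∧ f ∣ MvPolynomial.rename (⇑σ) (Qpoly (⇑e)))) ↔
     ((¬ ∃ f : MvPolynomial (Fin n) ℤ, 0 < f.totalDegree ∧
          f ∣ Ppoly (⇑e) ∧ MvPolynomial.rename (⇑σ) f = f) ∧
      (¬ ∃ f : MvPolynomial (Fin n) ℤ, 0 < f.totalDegree ∧
          f ∣ Qpoly (⇑e) ∧ MvPolynomial.rename (⇑σ) f = f))) :=
  statement5_general e σ hσ

end ArrowBreakingPaper
end

section
/- Let g be a finite-dimensional real nilpotent Lie algebra with a nice basis {e_1,…,e_n} such that for every basis element z lying in the center z(g), the number of ordered pairs (i,j) with e_i →^{e_j} z is at least n/2. Then for every arrow-breaking involution σ of the basis and every basis element z lying in z(g), the element σ(z) does not lie in z(g). -/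
/-!
Let `S w` be the set of sources of arrows into `e w`. Niceness makes an arrow into `e w` determined
by its source, so `|S w|` is the number of arrows into `w`. If both `z` and `σ z` were central,
the first arrow-breaking condition would make `σ '' S z` and `S (σ z)` disjoint, and neither
contains `z` because central elements are sources of no arrows. Hence `|S z| + |S (σ z)| < n`,
contradicting the assumption that each side is at least `n / 2`.
-/

open scoped BigOperators

namespace ArrowBreakingPaper

variable {ι : Type*} {g : Type*} [LieRing g] [LieAlgebra ℝ g]

lemma Arrow.swap {e : ι → g} {i j k : ι} (h : Arrow e i j k) : Arrow e j i k := by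
  obtain ⟨c, hc, hb⟩ := h
  exact ⟨-c, neg_ne_zero.mpr hc, by rw [← lie_skew, hb, neg_smul]⟩

lemma Arrow.repr_ne_zero {e : Module.Basis ι ℝ g} {i j k : ι} (h : Arrow (⇑e) i j k) :
    e.repr ⁅e i, e j⁆ k ≠ 0 := by
  obtain ⟨c, hc, hb⟩ := h
  simpa [hb] using hc

lemma not_arrow_of_central (e : Module.Basis ι ℝ g) {z : ι} (hz : ∀ x : g, ⁅x, e z⁆ = 0)
    (j k : ι) : ¬ Arrow (⇑e) z j k := by
  rintro ⟨c, hc, hb⟩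
  rw [← lie_skew, hz, neg_zero, eq_comm, smul_eq_zero] at hb
  exact hb.elim hc (e.ne_zero k)

def arrowSources (e : ι → g) (k : ι) : Set ι := {i | ∃ j, Arrow e i j k}

lemma ncard_arrows_eq_ncard_arrowSources {e : Module.Basis ι ℝ g} (hnice : IsNiceBasis e)
    (k : ι) : Set.ncard {p : ι × ι | Arrow (⇑e) p.1 p.2 k} = (arrowSources (⇑e) k).ncard := by
  have himage : Prod.fst '' {p : ι × ι | Arrow (⇑e) p.1 p.2 k} = arrowSources (⇑e) k := by
    ext i
    simp [arrowSources]
  rw [← himage, Set.InjOn.ncard_image]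
  rintro p hp q hq h
  exact Prod.ext h (hnice.2 p.1 k p.2 q.2 (Arrow.repr_ne_zero hp) (h ▸ Arrow.repr_ne_zero hq))

lemma notMem_arrowSources_of_central (e : Module.Basis ι ℝ g) {z : ι}
    (hz : ∀ x : g, ⁅x, e z⁆ = 0) (k : ι) : z ∉ arrowSources (⇑e) k :=
  fun ⟨j, h⟩ => not_arrow_of_central e hz j k h

lemma IsArrowBreaking.disjoint_image_arrowSources {e : ι → g} {σ : Equiv.Perm ι}
    (hσ : IsArrowBreaking e σ) (k : ι) :
    Disjoint (σ '' arrowSources e k) (arrowSources e (σ k)) := by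
  rw [Set.disjoint_left]
  rintro _ ⟨j, ⟨i, hij⟩, rfl⟩ ⟨l, hl⟩
  exact hσ.2.1 i j k hij.swap l hl.swap

lemma ncard_add_ncard_lt_card {α : Type*} [Finite α] {A B : Set α} (hAB : Disjoint A B) {z : α}
    (hA : z ∉ A) (hB : z ∉ B) : A.ncard + B.ncard < Nat.card α := by
  rw [← Set.ncard_union_eq hAB, ← Set.ncard_univ]
  refine Set.ncard_lt_ncard (Set.ssubset_univ_iff.mpr fun h => ?_)
  have hz : z ∈ A ∪ B := h ▸ Set.mem_univ z
  exact hz.elim hA hB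

theorem statement7_general {n : ℕ} {g : Type*} [LieRing g] [LieAlgebra ℝ g]
    (e : Module.Basis (Fin n) ℝ g) (hnice : IsNiceBasis e)
    (hmany : ∀ z : Fin n, (∀ x : g, ⁅x, e z⁆ = 0) →
      n ≤ 2 * Set.ncard {p : Fin n × Fin n | Arrow (⇑e) p.1 p.2 z}) :
    ∀ σ : Equiv.Perm (Fin n), IsArrowBreaking (⇑e) σ →
      ∀ z : Fin n, (∀ x : g, ⁅x, e z⁆ = 0) →
        ¬ (∀ x : g, ⁅x, e (σ z)⁆ = 0) := by
  intro σ hσ z hz hσz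
  have hmany_z := hmany z hz
  have hmany_σz := hmany (σ z) hσz
  rw [ncard_arrows_eq_ncard_arrowSources hnice] at hmany_z hmany_σz
  have hz_notMem_image : z ∉ σ '' arrowSources (⇑e) z := by
    rw [Equiv.image_eq_preimage_symm, Set.mem_preimage, (σ.symm_apply_eq).mpr (hσ.1 z).symm]
    exact notMem_arrowSources_of_central e hσz z
  have hlt := ncard_add_ncard_lt_card (hσ.disjoint_image_arrowSources z) hz_notMem_image
    (notMem_arrowSources_of_central e hz (σ z))
  rw [Set.ncard_image_of_injective _ σ.injective, Nat.card_fin] at hlt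
  omega

/-- If every central node of a nice basis has at least `n/2` incoming arrows,
then any arrow-breaking involution maps central basis elements outside the center. -/
theorem statement7 {n : ℕ} {g : Type*} [LieRing g] [LieAlgebra ℝ g]
    [LieRing.IsNilpotent g]
    (e : Module.Basis (Fin n) ℝ g) (hnice : IsNiceBasis e)
    (hmany : ∀ z : Fin n, (∀ x : g, ⁅x, e z⁆ = 0) →
      n ≤ 2 * Set.ncard {p : Fin n × Fin n | Arrow (⇑e) p.1 p.2 z}) :
    ∀ σ : Equiv.Perm (Fin n), IsArrowBreaking (⇑e) σ →
      ∀ z : Fin n, (∀ x : g, ⁅x, e z⁆ = 0) →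
        ¬ (∀ x : g, ⁅x, e (σ z)⁆ = 0) :=
  statement7_general e hnice hmany

end ArrowBreakingPaper
end

section
/- Let n = 2k+1 be odd with k ≥ 1, let ε_1,…,ε_{n+1} be the standard basis of ℝ^{n+1}, let Π⁺ = {ε_i − ε_j : 1 ≤ i < j ≤ n+1}, and for i = 1,…,n set h(i) = i+1 if i is odd and h(i) = i+2 if i is even. Let S = {ε_i − ε_j : 1 ≤ i ≤ n, h(i) ≤ j ≤ n+1}, and define σ on S by σ(ε_i − ε_j) = ε_{i'} − ε_{s_i(j)}, where s_i(j) = n+1+h(i)−j and i' = 1 if i = 1, i' = i+1 if i is even, and i' = i−1 if i > 1 is odd. Then σ is a well-defined order-two permutation of S, and for all γ, δ ∈ S: (a) if γ + δ ∈ Π⁺ then σ(γ) + σ(δ) ∉ Π⁺; and (b) if δ − γ ∈ S then σ(δ) − σ(γ) ∉ S. -/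
open scoped BigOperators

namespace ArrowBreakingPaper

variable {ι : Type*} {g : Type*} [LieRing g] [LieAlgebra ℝ g]

/-- The standard basis vectors `ε i` of `ℝ^∞`. -/
noncomputable def eps (i : ℕ) : ℕ → ℝ := fun j => if j = i then 1 else 0

/-- The positive roots of `A_n`: `ε_i − ε_j`, `1 ≤ i < j ≤ n+1`. -/
def PiPlusA (n : ℕ) : Set (ℕ → ℝ) :=
  {x | ∃ i j : ℕ, 1 ≤ i ∧ i < j ∧ j ≤ n + 1 ∧ x = eps i - eps j}

/-- `h(i) = i+1` for odd `i`, `h(i) = i+2` for even `i`. -/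
def hA (i : ℕ) : ℕ := if Odd i then i + 1 else i + 2

/-- Index pairs `(i,j)` of the roots `ε_i − ε_j` in `S`. -/
def TA (n : ℕ) : Set (ℕ × ℕ) :=
  {p | 1 ≤ p.1 ∧ p.1 ≤ n ∧ hA p.1 ≤ p.2 ∧ p.2 ≤ n + 1}

/-- The set of roots `S = {ε_i − ε_j : 1 ≤ i ≤ n, h(i) ≤ j ≤ n+1}`. -/
def SA (n : ℕ) : Set (ℕ → ℝ) := {x | ∃ p ∈ TA n, x = eps p.1 - eps p.2}

/-- The involution `σ(ε_i − ε_j) = ε_{i'} − ε_{s_i(j)}`, written on index pairs. -/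
def sigA (n : ℕ) (p : ℕ × ℕ) : ℕ × ℕ :=
  ((if p.1 = 1 then 1 else if Even p.1 then p.1 + 1 else p.1 - 1),
    n + 1 + hA p.1 - p.2)

/-!
A sum or difference of two roots `ε_a − ε_b` is again of this form only if the two roots share
an index, so (a) and (b) become statements about index pairs. Since `h(i') = h(i)`, `σ` keeps
the first index in its block among `{1}, {2,3}, {4,5}, …` and reverses the second one on
`[h(i), n+1]`; this moves shared indices apart, which after a case split on parities is linear
arithmetic.
-/

lemma eps_sub_eps_apply (a b t : ℕ) :
    (eps a - eps b) t = (if t = a then 1 else 0) - (if t = b then 1 else 0) := rfl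

lemma eps_sub_eps_apply_left {a b : ℕ} (hab : a ≠ b) : (eps a - eps b) a = 1 := by
  rw [eps_sub_eps_apply]; simp [hab]

lemma eps_sub_eps_apply_right {a b : ℕ} (hab : a ≠ b) : (eps a - eps b) b = -1 := by
  rw [eps_sub_eps_apply]; simp [hab.symm]

lemma eps_sub_eps_apply_le_one (a b t : ℕ) : (eps a - eps b) t ≤ 1 := by
  rw [eps_sub_eps_apply]
  split_ifs <;> norm_num

lemma eps_sub_eps_apply_nonneg {a b t : ℕ} (htb : t ≠ b) : 0 ≤ (eps a - eps b) t := by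
  rw [eps_sub_eps_apply, if_neg htb]
  split_ifs <;> norm_num

lemma eq_of_eps_sub_eps_apply_eq_one {a b t : ℕ} (h : (eps a - eps b) t = 1) : t = a := by
  rw [eps_sub_eps_apply] at h
  split_ifs at h <;> first | assumption | norm_num at h

lemma eq_of_eps_sub_eps_apply_eq_neg_one {a b t : ℕ} (h : (eps a - eps b) t = -1) : t = b := by
  rw [eps_sub_eps_apply] at h
  split_ifs at h <;> first | assumption | norm_num at h

lemma eq_and_eq_of_eps_sub_eps_eq {a b x y : ℕ} (hab : a ≠ b) (h : eps a - eps b = eps x - eps y) :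
    a = x ∧ b = y := by
  refine ⟨eq_of_eps_sub_eps_apply_eq_one (b := y) ?_,
    eq_of_eps_sub_eps_apply_eq_neg_one (a := x) ?_⟩
  · rw [← h, eps_sub_eps_apply_left hab]
  · rw [← h, eps_sub_eps_apply_right hab]

lemma chain_of_eps_sub_eps_add_eps_sub_eps_eq {a b c d x y : ℕ} (hab : a ≠ b) (hcd : c ≠ d)
    (h : (eps a - eps b) + (eps c - eps d) = eps x - eps y) :
    b = c ∨ d = a := by
  by_contra! hne
  obtain ⟨hbc, hda⟩ := hne
  have ha := congrFun h a
  have hc := congrFun h c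
  rw [Pi.add_apply, eps_sub_eps_apply_left hab] at ha
  rw [Pi.add_apply, eps_sub_eps_apply_left hcd] at hc
  have hca : (eps c - eps d) a = 0 := by
    linarith [eps_sub_eps_apply_nonneg (a := c) (Ne.symm hda), eps_sub_eps_apply_le_one x y a]
  have hac : (eps a - eps b) c = 0 := by
    linarith [eps_sub_eps_apply_nonneg (a := a) hbc.symm, eps_sub_eps_apply_le_one x y c]
  have hax : a = x := eq_of_eps_sub_eps_apply_eq_one (b := y) (by linarith)
  have hcx : c = x := eq_of_eps_sub_eps_apply_eq_one (b := y) (by linarith)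
  rw [hax, ← hcx, eps_sub_eps_apply_left hcd] at hca
  exact one_ne_zero hca

lemma hA_eq (i : ℕ) : hA i = i + 2 - i % 2 := by
  simp only [hA, Nat.odd_iff]
  split_ifs <;> omega

lemma lt_hA (i : ℕ) : i < hA i := by
  rw [hA_eq]; omega

lemma lt_of_mem_TA {n : ℕ} {p : ℕ × ℕ} (hp : p ∈ TA n) : p.1 < p.2 :=
  (lt_hA p.1).trans_le hp.2.2.1

/-- The index pattern for which `(ε_{p₁} − ε_{p₂}) + (ε_{q₁} − ε_{q₂})` is a root. -/
def Chained (p q : ℕ × ℕ) : Prop := p.2 = q.1 ∨ q.2 = p.1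

/-- The index pattern for which `(ε_{q₁} − ε_{q₂}) − (ε_{p₁} − ε_{p₂})` lies in `S`: it is then
`ε_{q₁} − ε_{p₁}` or `ε_{p₂} − ε_{q₂}`. -/
def DiffChained (p q : ℕ × ℕ) : Prop :=
  (q.2 = p.2 ∧ hA q.1 ≤ p.1) ∨ (q.1 = p.1 ∧ hA p.2 ≤ q.2)

lemma chained_of_add_mem_PiPlusA {n : ℕ} {p q : ℕ × ℕ} (hp : p.1 ≠ p.2) (hq : q.1 ≠ q.2)
    (h : (eps p.1 - eps p.2) + (eps q.1 - eps q.2) ∈ PiPlusA n) : Chained p q := by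
  obtain ⟨i, j, -, -, -, hij⟩ := h
  exact chain_of_eps_sub_eps_add_eps_sub_eps_eq hp hq hij

lemma diffChained_of_sub_mem_SA {n : ℕ} {p q : ℕ × ℕ} (hp : p.1 ≠ p.2) (hq : q.1 ≠ q.2)
    (h : (eps q.1 - eps q.2) - (eps p.1 - eps p.2) ∈ SA n) : DiffChained p q := by
  obtain ⟨r, hr, hqp⟩ := h
  have hr_ne : r.1 ≠ r.2 := (lt_of_mem_TA hr).ne
  have hsum : (eps q.1 - eps q.2) + (eps p.2 - eps p.1) = eps r.1 - eps r.2 := by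
    rw [← hqp]; abel
  rcases chain_of_eps_sub_eps_add_eps_sub_eps_eq hq hp.symm hsum with h2 | h1
  · have hroot : eps r.1 - eps r.2 = eps q.1 - eps p.1 := by rw [← hsum, h2]; abel
    obtain ⟨hr1, hr2⟩ := eq_and_eq_of_eps_sub_eps_eq hr_ne hroot
    exact Or.inl ⟨h2, hr1 ▸ hr2 ▸ hr.2.2.1⟩
  · have hroot : eps r.1 - eps r.2 = eps p.2 - eps q.2 := by rw [← hsum, h1]; abel
    obtain ⟨hr1, hr2⟩ := eq_and_eq_of_eps_sub_eps_eq hr_ne hroot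
    exact Or.inr ⟨h1.symm, hr1 ▸ hr2 ▸ hr.2.2.1⟩

lemma sigA_mem_TA {n : ℕ} (hn : Odd n) {p : ℕ × ℕ} (hp : p ∈ TA n) : sigA n p ∈ TA n := by
  obtain ⟨h1, h2, h3, h4⟩ := hp
  rw [Nat.odd_iff] at hn
  simp only [hA_eq] at h3
  simp only [TA, Set.mem_ofPred_eq, sigA, hA_eq, Nat.even_iff]
  split_ifs <;> omega

lemma sigA_sigA {n : ℕ} {p : ℕ × ℕ} (hp : p ∈ TA n) : sigA n (sigA n p) = p := by
  obtain ⟨h1, h2, h3, h4⟩ := hp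
  simp only [hA_eq] at h3
  simp only [sigA, hA_eq, Nat.even_iff, Prod.ext_iff]
  split_ifs <;> omega

lemma not_chained_sigA {n : ℕ} (hn : Odd n) {p q : ℕ × ℕ} (hp : p ∈ TA n) (hq : q ∈ TA n)
    (hpq : Chained p q) : ¬ Chained (sigA n p) (sigA n q) := by
  obtain ⟨h1, h2, h3, h4⟩ := hp
  obtain ⟨h5, h6, h7, h8⟩ := hq
  rw [Nat.odd_iff] at hn
  simp only [hA_eq] at h3 h7
  simp only [Chained, sigA, hA_eq, Nat.even_iff] at hpq ⊢
  split_ifs <;> omega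

lemma not_diffChained_sigA {n : ℕ} {p q : ℕ × ℕ} (hp : p ∈ TA n) (hq : q ∈ TA n)
    (hpq : DiffChained p q) : ¬ DiffChained (sigA n p) (sigA n q) := by
  obtain ⟨h1, h2, h3, h4⟩ := hp
  obtain ⟨h5, h6, h7, h8⟩ := hq
  simp only [hA_eq] at h3 h7
  simp only [DiffChained, sigA, hA_eq, Nat.even_iff] at hpq ⊢
  split_ifs <;> omega

/-- `σ` is a well-defined order-two permutation of `S` and is arrow-breaking:
(a) sums of roots of `S` that are roots are broken by `σ`, and (b) differences of roots of `S`
that lie in `S` are broken by `σ`. -/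
theorem statement9 (k : ℕ) (hk : 1 ≤ k) (n : ℕ) (hn : n = 2 * k + 1) :
    (∀ p ∈ TA n, sigA n p ∈ TA n) ∧
    (∀ p ∈ TA n, sigA n (sigA n p) = p) ∧
    (∃ p ∈ TA n, sigA n p ≠ p) ∧
    (∀ p ∈ TA n, ∀ q ∈ TA n,
      (eps p.1 - eps p.2) + (eps q.1 - eps q.2) ∈ PiPlusA n →
        (eps (sigA n p).1 - eps (sigA n p).2) + (eps (sigA n q).1 - eps (sigA n q).2)
          ∉ PiPlusA n) ∧
    (∀ p ∈ TA n, ∀ q ∈ TA n,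
      (eps q.1 - eps q.2) - (eps p.1 - eps p.2) ∈ SA n →
        (eps (sigA n q).1 - eps (sigA n q).2) - (eps (sigA n p).1 - eps (sigA n p).2)
          ∉ SA n) := by
  have hodd : Odd n := ⟨k, hn⟩
  have hne {p : ℕ × ℕ} (hp : p ∈ TA n) : p.1 ≠ p.2 := (lt_of_mem_TA hp).ne
  have hσne {p : ℕ × ℕ} (hp : p ∈ TA n) : (sigA n p).1 ≠ (sigA n p).2 :=
    hne (sigA_mem_TA hodd hp)
  refine ⟨fun p hp => sigA_mem_TA hodd hp, fun p hp => sigA_sigA hp, ?_, ?_, ?_⟩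
  · refine ⟨(2, 4), ⟨by norm_num, by omega, by simp [hA_eq], by omega⟩, ?_⟩
    simp [sigA, Prod.ext_iff]
  · intro p hp q hq hsum hσsum
    exact not_chained_sigA hodd hp hq (chained_of_add_mem_PiPlusA (hne hp) (hne hq) hsum)
      (chained_of_add_mem_PiPlusA (hσne hp) (hσne hq) hσsum)
  · intro p hp q hq hdiff hσdiff
    exact not_diffChained_sigA hp hq (diffChained_of_sub_mem_SA (hne hp) (hne hq) hdiff)
      (diffChained_of_sub_mem_SA (hσne hp) (hσne hq) hσdiff)

end ArrowBreakingPaper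
end

section
/- Let n ≥ 3, let ε_1,…,ε_n be the standard basis of ℝ^n, let Π⁺ = {ε_i − ε_j : 1 ≤ i < j ≤ n} ∪ {ε_i + ε_j : 1 ≤ i < j ≤ n} ∪ {ε_i : 1 ≤ i ≤ n} (the positive roots of B_n), and let S = Π⁺ ∖ {ε_i − ε_j : 1 ≤ i < j ≤ n−1}. Then there exists an order-two permutation σ of S such that for all γ, δ ∈ S: (a) if γ + δ ∈ Π⁺ then σ(γ) + σ(δ) ∉ Π⁺; and (b) if δ − γ ∈ S then σ(δ) − σ(γ) ∉ S. -/
open scoped BigOperators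

namespace ArrowBreakingPaper

variable {ι : Type*} {g : Type*} [LieRing g] [LieAlgebra ℝ g]

/-- The positive roots of `B_n`: `ε_i ± ε_j` for `1 ≤ i < j ≤ n` and `ε_i` for `1 ≤ i ≤ n`. -/
def PiPlusB (n : ℕ) : Set (ℕ → ℝ) :=
  {x | (∃ i j : ℕ, 1 ≤ i ∧ i < j ∧ j ≤ n ∧ (x = eps i - eps j ∨ x = eps i + eps j)) ∨
       (∃ i : ℕ, 1 ≤ i ∧ i ≤ n ∧ x = eps i)}

/-- `S = Π⁺ ∖ {ε_i − ε_j : 1 ≤ i < j ≤ n−1}`. -/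
def SB (n : ℕ) : Set (ℕ → ℝ) :=
  PiPlusB n \ {x | ∃ i j : ℕ, 1 ≤ i ∧ i < j ∧ j ≤ n - 1 ∧ x = eps i - eps j}


/-!
Weigh vectors by the linear form `weight n`, which is `1` on `ε_i` for `i < n` and `6` on `ε_n`. On `S`
it takes the values `2, 7, 1, 6, -5` on `ε_i + ε_j`, `ε_i + ε_n`, `ε_i`, `ε_n`, `ε_i - ε_n` (`i, j < n`), and
it vanishes on the other positive roots `ε_i - ε_j`. The involution swaps `ε_i + ε_n ↔ ε_i`, sends `ε_n` to
`ε_1 + ε_2`, fixes each `ε_c - ε_n` or swaps it with some `ε_i + ε_j`, and pairs all remaining `ε_i + ε_j`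
(`j < n`) with roots `ε_c + ε_d` of disjoint support. For such a map the weights alone show that
`σ γ + σ δ` is never a root when `γ + δ` is one. They also show that `σ δ - σ γ` can only lie in `S` when
`δ` and `σ δ` are disjoint roots `ε_i + ε_j`, while `γ` and `σ γ` both have a coordinate `1` at some
`k < n`. Then `δ - γ ∈ S` forces `δ_k = 1`, hence `(σ δ)_k = 0`, and `σ δ - σ γ` has a coordinate `-1`
at `k < n`, which no root of `S` has.
-/

open Finset

lemma eps_injective : Function.Injective eps := by
  intro i j h
  by_contra hij
  simpa [eps, hij] using congrFun h i

lemma eps_add_eps_apply_ne_zero {i j : ℕ} (hij : i ≠ j) (t : ℕ) :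
    (eps i + eps j) t ≠ 0 ↔ t = i ∨ t = j := by
  simp only [Pi.add_apply, eps]
  split_ifs <;> simp_all

lemma eps_add_eps_inj {i j k l : ℕ} (hij : i < j) (hkl : k < l)
    (h : eps i + eps j = eps k + eps l) : i = k ∧ j = l := by
  have supp : ∀ t, (t = i ∨ t = j) ↔ (t = k ∨ t = l) := fun t => by
    rw [← eps_add_eps_apply_ne_zero hij.ne, h, eps_add_eps_apply_ne_zero hkl.ne]
  have := supp i; have := supp j; have := supp k; have := supp l
  omega

lemma eps_add_eps_apply_eq_zero_or {i j c d : ℕ} (hci : c ≠ i) (hcj : c ≠ j) (hdi : d ≠ i)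
    (hdj : d ≠ j) (k : ℕ) : (eps i + eps j) k = 0 ∨ (eps c + eps d) k = 0 := by
  simp only [Pi.add_apply, eps]
  split_ifs <;> first | omega | norm_num

noncomputable def weight (n : ℕ) (x : ℕ → ℝ) : ℝ := ∑ k ∈ Icc 1 n, x k + 5 * x n

lemma weight_add (n : ℕ) (x y : ℕ → ℝ) : weight n (x + y) = weight n x + weight n y := by
  simp only [weight, Pi.add_apply, sum_add_distrib]; ring

lemma weight_sub (n : ℕ) (x y : ℕ → ℝ) : weight n (x - y) = weight n x - weight n y := by
  simp only [weight, Pi.sub_apply, sum_sub_distrib]; ring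

lemma weight_eps {n i : ℕ} (h1 : 1 ≤ i) (hn : i ≤ n) :
    weight n (eps i) = if i = n then 6 else 1 := by
  have hsum : ∑ k ∈ Icc 1 n, eps i k = 1 := by
    simp only [eps]
    rw [sum_ite_eq' (Icc 1 n) i (fun _ => (1 : ℝ)), if_pos (mem_Icc.mpr ⟨h1, hn⟩)]
  rw [weight, hsum, eps]
  split_ifs <;> first | omega | norm_num

lemma weight_mem_of_mem_piPlusB {n : ℕ} {x : ℕ → ℝ} (hx : x ∈ PiPlusB n) :
    weight n x ∈ ({-5, 0, 1, 2, 6, 7} : Set ℝ) := by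
  rcases hx with ⟨i, j, hi, hij, hjn, rfl | rfl⟩ | ⟨i, hi, hin, rfl⟩
  all_goals simp only [weight_add, weight_sub, weight_eps hi (by omega : i ≤ n)]
  all_goals try rw [weight_eps (by omega) hjn, if_neg (by omega : i ≠ n)]
  all_goals split_ifs <;> norm_num

inductive SRoot
  | plus (i j : ℕ)
  | short (i : ℕ)
  | minusLast (i : ℕ)

instance : Nonempty SRoot := ⟨.short 0⟩

namespace SRoot

def Valid (n : ℕ) : SRoot → Prop
  | plus i j => 1 ≤ i ∧ i < j ∧ j ≤ n
  | short i => 1 ≤ i ∧ i ≤ n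
  | minusLast i => 1 ≤ i ∧ i < n

noncomputable def vec (n : ℕ) : SRoot → ℕ → ℝ
  | plus i j => eps i + eps j
  | short i => eps i
  | minusLast i => eps i - eps n

def level (n : ℕ) : SRoot → ℝ
  | plus _ j => if j = n then 7 else 2
  | short i => if i = n then 6 else 1
  | minusLast _ => -5

lemma level_mem (n : ℕ) (l : SRoot) : l.level n ∈ ({-5, 1, 2, 6, 7} : Set ℝ) := by
  rcases l with ⟨i, j⟩ | i | i <;> simp only [level] <;> (try split_ifs) <;> norm_num

lemma weight_vec {n : ℕ} {l : SRoot} (hl : l.Valid n) : weight n (l.vec n) = l.level n := by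
  rcases l with ⟨i, j⟩ | i | i <;> obtain ⟨h1, h2⟩ := hl
  · rw [vec, weight_add, weight_eps h1 (by omega), weight_eps (by omega) h2.2, if_neg (by omega),
      level]
    split_ifs <;> norm_num
  · rw [vec, weight_eps h1 h2, level]
  · rw [vec, weight_sub, weight_eps h1 h2.le, weight_eps (by omega) le_rfl, if_neg h2.ne,
      if_pos rfl, level]
    norm_num

lemma vec_mem_SB {n : ℕ} {l : SRoot} (hl : l.Valid n) : l.vec n ∈ SB n := by
  refine ⟨?_, ?_⟩
  · rcases l with ⟨i, j⟩ | i | i <;> obtain ⟨h1, h2⟩ := hl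
    · exact Or.inl ⟨i, j, h1, h2.1, h2.2, Or.inr rfl⟩
    · exact Or.inr ⟨i, h1, h2, rfl⟩
    · exact Or.inl ⟨i, n, h1, h2, le_rfl, Or.inl rfl⟩
  · rintro ⟨i, j, hi, hij, hjn, hx⟩
    have h0 : weight n (l.vec n) = 0 := by
      rw [hx, weight_sub, weight_eps hi (by omega), weight_eps (by omega) (by omega),
        if_neg (by omega), if_neg (by omega), sub_self]
    have h := level_mem n l
    rw [← weight_vec hl, h0] at h
    norm_num at h

lemma exists_valid_of_mem_SB {n : ℕ} {x : ℕ → ℝ} (hx : x ∈ SB n) :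
    ∃ l : SRoot, l.Valid n ∧ l.vec n = x := by
  obtain ⟨⟨i, j, hi, hij, hjn, rfl | rfl⟩ | ⟨i, hi, hin, rfl⟩, hnot⟩ := hx
  · obtain rfl : j = n := by
      by_contra hj
      exact hnot ⟨i, j, hi, hij, by omega, rfl⟩
    exact ⟨minusLast i, ⟨hi, hij⟩, rfl⟩
  · exact ⟨plus i j, ⟨hi, hij, hjn⟩, rfl⟩
  · exact ⟨short i, ⟨hi, hin⟩, rfl⟩

lemma vec_injOn (n : ℕ) : Set.InjOn (vec n) {l | l.Valid n} := by
  intro l hl l' hl' h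
  -- labels with different constructors already differ in weight
  have hlev : l.level n = l'.level n := by rw [← weight_vec hl, ← weight_vec hl', h]
  rcases l with ⟨i, j⟩ | i | i <;> rcases l' with ⟨k, m⟩ | k | k <;>
    simp only [level] at hlev <;> simp only [vec] at h <;>
    try (split_ifs at hlev <;> norm_num at hlev; done)
  · obtain ⟨rfl, rfl⟩ := eps_add_eps_inj hl.2.1 hl'.2.1 h; rfl
  · rw [eps_injective h]
  · rw [eps_injective (sub_left_injective h)]

end SRoot

lemma weight_mem_of_mem_SB {n : ℕ} {x : ℕ → ℝ} (hx : x ∈ SB n) :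
    weight n x ∈ ({-5, 1, 2, 6, 7} : Set ℝ) := by
  obtain ⟨l, hl, rfl⟩ := SRoot.exists_valid_of_mem_SB hx
  rw [SRoot.weight_vec hl]
  exact SRoot.level_mem n l

lemma eq_of_mem_SB_of_apply_eq_neg_one {n k : ℕ} {x : ℕ → ℝ} (hx : x ∈ SB n)
    (hk : x k = -1) : k = n := by
  obtain ⟨l, -, rfl⟩ := SRoot.exists_valid_of_mem_SB hx
  rcases l with ⟨i, j⟩ | i | i <;> simp only [SRoot.vec, Pi.add_apply, Pi.sub_apply, eps] at hk <;>
    split_ifs at hk <;> first | assumption | norm_num at hk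

def AdmissibleWeightPair (a b : ℝ) : Prop :=
  a = 7 ∧ b = 1 ∨ a = 1 ∧ b = 7 ∨ a = 6 ∧ b = 2 ∨ a = 2 ∧ (b = 6 ∨ b = -5 ∨ b = 2) ∨
    a = -5 ∧ (b = -5 ∨ b = 2)

lemma AdmissibleWeightPair.add_notMem {a a' b b' : ℝ} (ha : AdmissibleWeightPair a a')
    (hb : AdmissibleWeightPair b b') (h : a + b ∈ ({-5, 0, 1, 2, 6, 7} : Set ℝ)) :
    a' + b' ∉ ({-5, 0, 1, 2, 6, 7} : Set ℝ) := by
  rcases ha with ⟨rfl, rfl⟩ | ⟨rfl, rfl⟩ | ⟨rfl, rfl⟩ | ⟨rfl, rfl | rfl | rfl⟩ | ⟨rfl, rfl | rfl⟩ <;>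
  rcases hb with ⟨rfl, rfl⟩ | ⟨rfl, rfl⟩ | ⟨rfl, rfl⟩ | ⟨rfl, rfl | rfl | rfl⟩ | ⟨rfl, rfl | rfl⟩ <;>
  revert h <;> norm_num

lemma AdmissibleWeightPair.of_sub_mem {a a' b b' : ℝ} (ha : AdmissibleWeightPair a a')
    (hb : AdmissibleWeightPair b b') (h : b - a ∈ ({-5, 1, 2, 6, 7} : Set ℝ))
    (h' : b' - a' ∈ ({-5, 1, 2, 6, 7} : Set ℝ)) :
    b = 2 ∧ b' = 2 ∧ a ≠ 2 ∧ a ≠ 6 ∧ a' ≠ 2 := by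
  rcases ha with ⟨rfl, rfl⟩ | ⟨rfl, rfl⟩ | ⟨rfl, rfl⟩ | ⟨rfl, rfl | rfl | rfl⟩ | ⟨rfl, rfl | rfl⟩ <;>
  rcases hb with ⟨rfl, rfl⟩ | ⟨rfl, rfl⟩ | ⟨rfl, rfl⟩ | ⟨rfl, rfl | rfl | rfl⟩ | ⟨rfl, rfl | rfl⟩ <;>
  revert h h' <;> norm_num

section Criterion

variable {n : ℕ} {σ : (ℕ → ℝ) → ℕ → ℝ}

theorem add_notMem_piPlusB_of_admissible
    (hσ : ∀ x ∈ SB n, AdmissibleWeightPair (weight n x) (weight n (σ x)))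
    {γ δ : ℕ → ℝ} (hγ : γ ∈ SB n) (hδ : δ ∈ SB n) (h : γ + δ ∈ PiPlusB n) :
    σ γ + σ δ ∉ PiPlusB n := fun h' => by
  have hw := weight_mem_of_mem_piPlusB h
  have hw' := weight_mem_of_mem_piPlusB h'
  rw [weight_add] at hw hw'
  exact (hσ γ hγ).add_notMem (hσ δ hδ) hw hw'

theorem sub_notMem_SB_of_admissible
    (hσ : ∀ x ∈ SB n, AdmissibleWeightPair (weight n x) (weight n (σ x)))
    (hone : ∀ x ∈ SB n, weight n x ≠ 2 → weight n x ≠ 6 → weight n (σ x) ≠ 2 →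
      ∃ k ≠ n, x k = 1 ∧ σ x k = 1)
    (hdisj : ∀ x ∈ SB n, weight n x = 2 → weight n (σ x) = 2 → ∀ k, x k = 0 ∨ σ x k = 0)
    {γ δ : ℕ → ℝ} (hγ : γ ∈ SB n) (hδ : δ ∈ SB n) (h : δ - γ ∈ SB n) :
    σ δ - σ γ ∉ SB n := fun h' => by
  have hw := weight_mem_of_mem_SB h
  have hw' := weight_mem_of_mem_SB h'
  rw [weight_sub] at hw hw'
  obtain ⟨hδ2, hσδ2, hγ2, hγ6, hσγ2⟩ := (hσ γ hγ).of_sub_mem (hσ δ hδ) hw hw'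
  obtain ⟨k, hkn, hγk, hσγk⟩ := hone γ hγ hγ2 hγ6 hσγ2
  have hδk : δ k ≠ 0 := fun hδk =>
    hkn (eq_of_mem_SB_of_apply_eq_neg_one h (by simp [hδk, hγk]))
  have hσδk : σ δ k = 0 := (hdisj δ hδ hδ2 hσδ2 k).resolve_left hδk
  exact hkn (eq_of_mem_SB_of_apply_eq_neg_one h' (by simp [hσδk, hσγk]))

end Criterion

def blockSwap (x : ℕ) : ℕ := if x % 2 = 1 then x + 1 else x - 1

namespace SRoot

-- With `h = (n - 1) / 2`, the indices `1, …, 2h` form blocks `{2t - 1, 2t}` and `blockSwap` swaps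
-- within a block, so `ε_i + ε_j ↦ ε_{blockSwap i} + ε_{blockSwap j}` has disjoint support unless
-- `{i, j}` is a block. The block `{1, 2}` goes to `ε_n`; a block `{2t - 1, 2t}` with `t ≥ 2` goes
-- to `ε_t - ε_n` if `n - 1` is even, and to `ε_{t-1} + ε_{n-1}` if `n - 1` is odd, in which case the
-- remaining roots `ε_i + ε_{n-1}` (`i ≥ h`) go to `ε_i - ε_n`.
def partner (n : ℕ) : SRoot → SRoot
  | plus i j =>
    if j = n then short i
    else if j ≤ 2 * ((n - 1) / 2) then
      if i % 2 = 1 ∧ j = i + 1 then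
        if i = 1 then short n
        else if (n - 1) % 2 = 0 then minusLast ((i + 1) / 2)
        else plus ((i - 1) / 2) (n - 1)
      else plus (blockSwap i) (blockSwap j)
    else if i < (n - 1) / 2 then plus (2 * i + 1) (2 * i + 2)
    else minusLast i
  | short i => if i = n then plus 1 2 else plus i n
  | minusLast c =>
    if (n - 1) % 2 = 0 then
      if 2 ≤ c ∧ c ≤ (n - 1) / 2 then plus (2 * c - 1) (2 * c) else minusLast c
    else if (n - 1) / 2 ≤ c ∧ c < n - 1 then plus c (n - 1) else minusLast c

lemma valid_partner {n : ℕ} (hn : 2 ≤ n) {l : SRoot} (hl : l.Valid n) : (l.partner n).Valid n := by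
  rcases l with ⟨i, j⟩ | i | i <;> simp only [Valid] at hl <;> simp only [partner, blockSwap] <;>
    split_ifs <;> simp only [Valid] <;> omega

lemma partner_partner {n : ℕ} (hn : 3 ≤ n) {l : SRoot} (hl : l.Valid n) :
    (l.partner n).partner n = l := by
  rcases l with ⟨i, j⟩ | i | i <;> simp only [Valid] at hl <;> simp only [partner] <;>
    split_ifs <;> simp only [blockSwap] <;> split_ifs <;>
    (try simp only [plus.injEq, short.injEq, minusLast.injEq, true_and, and_true,
      not_true_eq_false] at *) <;> omega

lemma admissible_level_partner {n : ℕ} (hn : 3 ≤ n) {l : SRoot} (hl : l.Valid n) :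
    AdmissibleWeightPair (l.level n) ((l.partner n).level n) := by
  rcases l with ⟨i, j⟩ | i | i <;> simp only [Valid] at hl <;> simp only [partner] <;>
    split_ifs <;> simp only [level, blockSwap] <;> (try split_ifs) <;>
    first | omega | norm_num [AdmissibleWeightPair]

lemma partner_plus_disjoint {n i j : ℕ} (hl : (plus i j).Valid n) (hj : j ≠ n)
    (h : ((plus i j).partner n).level n = 2) :
    ∃ c d, (plus i j).partner n = plus c d ∧ c ≠ i ∧ c ≠ j ∧ d ≠ i ∧ d ≠ j := by
  simp only [Valid] at hl
  simp only [partner, if_neg hj] at h ⊢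
  split_ifs at h ⊢ <;> simp only [level] at h <;> (try split_ifs at h) <;> norm_num at h <;>
    refine ⟨_, _, rfl, ?_⟩ <;> (try simp only [blockSwap]) <;> (try split_ifs) <;> omega

lemma vec_apply_eq_zero_or_of_level {n : ℕ} {l : SRoot} (hl : l.Valid n) (h : l.level n = 2)
    (h' : (l.partner n).level n = 2) (k : ℕ) : l.vec n k = 0 ∨ (l.partner n).vec n k = 0 := by
  rcases l with ⟨i, j⟩ | i | i
  · have hj : j ≠ n := by
      rintro rfl
      norm_num [level] at h
    obtain ⟨c, d, hcd, hci, hcj, hdi, hdj⟩ := partner_plus_disjoint hl hj h'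
    rw [hcd]
    exact eps_add_eps_apply_eq_zero_or hci hcj hdi hdj k
  · simp only [level] at h
    split_ifs at h <;> norm_num at h
  · norm_num [level] at h

lemma partner_minusLast_of_level_ne_two {n c : ℕ}
    (h : ((minusLast c).partner n).level n ≠ 2) : (minusLast c).partner n = minusLast c := by
  simp only [partner] at h ⊢
  split_ifs at h ⊢ <;> simp only [level] at h <;> (try split_ifs at h) <;>
    first | rfl | omega | norm_num at h

lemma exists_vec_apply_eq_one_of_level_ne {n : ℕ} {l : SRoot} (hl : l.Valid n)
    (h2 : l.level n ≠ 2) (h6 : l.level n ≠ 6) (h2' : (l.partner n).level n ≠ 2) :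
    ∃ k ≠ n, l.vec n k = 1 ∧ (l.partner n).vec n k = 1 := by
  rcases l with ⟨i, j⟩ | i | i <;> simp only [Valid] at hl
  · obtain rfl : j = n := by
      by_contra hj
      simp [level, hj] at h2
    refine ⟨i, hl.2.1.ne, ?_, ?_⟩ <;> simp [partner, vec, eps, hl.2.1.ne]
  · have hi : i ≠ n := by
      rintro rfl
      simp [level] at h6
    refine ⟨i, hi, ?_, ?_⟩ <;> simp [partner, vec, eps, hi]
  · rw [partner_minusLast_of_level_ne_two h2']
    exact ⟨i, hl.2.ne, by simp [vec, eps, hl.2.ne]⟩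

end SRoot

noncomputable def partnerMap (n : ℕ) (x : ℕ → ℝ) : ℕ → ℝ :=
  ((Classical.epsilon fun l : SRoot => l.Valid n ∧ l.vec n = x).partner n).vec n

lemma partnerMap_vec {n : ℕ} {l : SRoot} (hl : l.Valid n) :
    partnerMap n (l.vec n) = (l.partner n).vec n := by
  obtain ⟨h1, h2⟩ := Classical.epsilon_spec
    (p := fun l' : SRoot => l'.Valid n ∧ l'.vec n = l.vec n) ⟨l, hl, rfl⟩
  rw [partnerMap, SRoot.vec_injOn n h1 hl h2]

lemma partnerMap_mem {n : ℕ} (hn : 2 ≤ n) {x : ℕ → ℝ} (hx : x ∈ SB n) :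
    partnerMap n x ∈ SB n := by
  obtain ⟨l, hl, rfl⟩ := SRoot.exists_valid_of_mem_SB hx
  rw [partnerMap_vec hl]
  exact SRoot.vec_mem_SB (SRoot.valid_partner hn hl)

lemma partnerMap_partnerMap {n : ℕ} (hn : 3 ≤ n) {x : ℕ → ℝ} (hx : x ∈ SB n) :
    partnerMap n (partnerMap n x) = x := by
  obtain ⟨l, hl, rfl⟩ := SRoot.exists_valid_of_mem_SB hx
  rw [partnerMap_vec hl, partnerMap_vec (SRoot.valid_partner (by omega) hl),
    SRoot.partner_partner hn hl]

lemma admissible_weight_partnerMap {n : ℕ} (hn : 3 ≤ n) {x : ℕ → ℝ} (hx : x ∈ SB n) :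
    AdmissibleWeightPair (weight n x) (weight n (partnerMap n x)) := by
  obtain ⟨l, hl, rfl⟩ := SRoot.exists_valid_of_mem_SB hx
  rw [partnerMap_vec hl, SRoot.weight_vec hl, SRoot.weight_vec (SRoot.valid_partner (by omega) hl)]
  exact SRoot.admissible_level_partner hn hl

lemma exists_partnerMap_apply_eq_one {n : ℕ} (hn : 2 ≤ n) {x : ℕ → ℝ} (hx : x ∈ SB n)
    (h2 : weight n x ≠ 2) (h6 : weight n x ≠ 6) (h2' : weight n (partnerMap n x) ≠ 2) :
    ∃ k ≠ n, x k = 1 ∧ partnerMap n x k = 1 := by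
  obtain ⟨l, hl, rfl⟩ := SRoot.exists_valid_of_mem_SB hx
  rw [partnerMap_vec hl] at h2' ⊢
  rw [SRoot.weight_vec hl] at h2 h6
  rw [SRoot.weight_vec (SRoot.valid_partner hn hl)] at h2'
  exact SRoot.exists_vec_apply_eq_one_of_level_ne hl h2 h6 h2'

lemma partnerMap_apply_eq_zero_or {n : ℕ} (hn : 2 ≤ n) {x : ℕ → ℝ} (hx : x ∈ SB n)
    (h : weight n x = 2) (h' : weight n (partnerMap n x) = 2) (k : ℕ) :
    x k = 0 ∨ partnerMap n x k = 0 := by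
  obtain ⟨l, hl, rfl⟩ := SRoot.exists_valid_of_mem_SB hx
  rw [partnerMap_vec hl] at h' ⊢
  rw [SRoot.weight_vec hl] at h
  rw [SRoot.weight_vec (SRoot.valid_partner hn hl)] at h'
  exact SRoot.vec_apply_eq_zero_or_of_level hl h h' k

/-- There is an order-two permutation of `S` breaking both sums and
differences of roots (an arrow-breaking involution for the parabolic nilradical of type `B`). -/
theorem statement11 (n : ℕ) (hn : 3 ≤ n) :
    ∃ σ : (ℕ → ℝ) → (ℕ → ℝ),
      (∀ x ∈ SB n, σ x ∈ SB n) ∧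
      (∀ x ∈ SB n, σ (σ x) = x) ∧
      (∃ x ∈ SB n, σ x ≠ x) ∧
      (∀ γ ∈ SB n, ∀ δ ∈ SB n, γ + δ ∈ PiPlusB n → σ γ + σ δ ∉ PiPlusB n) ∧
      (∀ γ ∈ SB n, ∀ δ ∈ SB n, δ - γ ∈ SB n → σ δ - σ γ ∉ SB n) := by
  have hadm := fun x (hx : x ∈ SB n) => admissible_weight_partnerMap hn hx
  have heps : eps 1 ∈ SB n := SRoot.vec_mem_SB (l := .short 1) ⟨le_rfl, by omega⟩
  refine ⟨partnerMap n, fun x hx => partnerMap_mem (by omega) hx,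
    fun x hx => partnerMap_partnerMap hn hx, ⟨eps 1, heps, fun h => ?_⟩,
    fun γ hγ δ hδ => add_notMem_piPlusB_of_admissible hadm hγ hδ,
    fun γ hγ δ hδ => sub_notMem_SB_of_admissible hadm
      (fun x hx => exists_partnerMap_apply_eq_one (by omega) hx)
      (fun x hx => partnerMap_apply_eq_zero_or (by omega) hx) hγ hδ⟩
  have h1 := hadm _ heps
  rw [h, weight_eps le_rfl (by omega), if_neg (by omega)] at h1
  norm_num [AdmissibleWeightPair] at h1

end ArrowBreakingPaper
end
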